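/- arXiv:0710.5902 — 7 statements merged into one kernel-verified Lean document; each statement's English description precedes it below -/
import Mathlib

section
/- If V is an n-dimensional Chebyshev system of continuous functions on the circle S¹ = ℝ/2πℤ (i.e., every nonzero element of V has at most n−1 zeros counted with multiplicity), and h is a continuous function on S¹ that is L²-orthogonal to every element of V, then h has at least n+1 sign changes. -/
/-!
Suppose `h` has no `n + 1` alternating signs. Comparing alternations of maximal length, `h` then
weakly follows a sign pattern with at most `n - 1` sign changes, at points `z` of `(0, 2π)`.
The Chebyshev property makes the collocation determinant `D(p) = det (f j (p i))` of a basis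
nonzero, hence of constant sign, on increasing tuples in `(0, 2π)`, so `x ↦ D(x, t)` changes sign
exactly at the nodes `t`. Taking as nodes the `z` followed by further nodes pushed towards `2π`
and passing to a limit by compactness gives `0 ≠ g ∈ V` with the sign pattern of `h`. Then `h * g`
has constant sign and integral zero, so it vanishes identically, which is impossible since `g` has
finitely many zeros and `h` does not vanish identically.
-/

open Real MeasureTheory Set Topology

lemma nonneg_of_nonneg_on_Ioo {f : ℝ → ℝ} (hf : Continuous f) {a b : ℝ} (hab : a < b)
    (hpos : ∀ x ∈ Ioo a b, 0 ≤ f x) {x : ℝ} (hx : x ∈ Icc a b) : 0 ≤ f x :=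
  (isClosed_le continuous_const hf).closure_subset_iff.2 hpos (by rwa [closure_Ioo hab.ne])

lemma Function.Periodic.exists_mem_Ioo_ne_zero {h : ℝ → ℝ} {T : ℝ} (hper : Periodic h T)
    (hT : 0 < T) (hh : Continuous h) (hne : ∃ x, h x ≠ 0) : ∃ x ∈ Ioo 0 T, h x ≠ 0 := by
  by_contra! H
  obtain ⟨x, hx⟩ := hne
  obtain ⟨y, hy, hxy⟩ := hper.exists_mem_Ico₀ hT x
  exact hx (hxy.trans ((isClosed_eq hh continuous_const).closure_subset_iff.2 H
    (by rw [closure_Ioo hT.ne]; exact Ico_subset_Icc_self hy)))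

lemma StrictMono.finAppend {α : Type*} [Preorder α] {c d : ℕ} {z : Fin c → α} {w : Fin d → α}
    (hz : StrictMono z) (hw : StrictMono w) (hzw : ∀ i j, z i < w j) :
    StrictMono (Fin.append z w) := by
  intro i j hij
  induction i using Fin.addCases with
  | left i =>
    induction j using Fin.addCases with
    | left j => simpa using hz (Fin.lt_def.2 (by simpa using Fin.lt_def.1 hij))
    | right j => simpa using hzw i j
  | right i =>
    induction j using Fin.addCases with
    | left j => exact absurd hij (by simp [Fin.lt_def]; omega)
    | right j => simpa using hw (Fin.lt_def.2 (by simpa using Fin.lt_def.1 hij))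

lemma exists_strictMono_mem_Ioo {a b : ℝ} (hab : a < b) (d : ℕ) :
    ∃ w : Fin d → ℝ, StrictMono w ∧ ∀ j, w j ∈ Ioo a b := by
  obtain ⟨s, hs, hcard⟩ := (Ioo_infinite hab).exists_subset_card_eq d
  exact ⟨s.orderEmbOfFin hcard, (s.orderEmbOfFin hcard).strictMono,
    fun j => hs (s.orderEmbOfFin_mem hcard j)⟩

lemma IsPreconnected.mul_pos_of_ne_zero {X : Type*} [TopologicalSpace X] {S : Set X}
    (hS : IsPreconnected S) {g : X → ℝ} (hg : ContinuousOn g S) (h0 : ∀ x ∈ S, g x ≠ 0)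
    {x y : X} (hx : x ∈ S) (hy : y ∈ S) : 0 < g x * g y := by
  by_contra! hxy
  rcases mul_nonpos_iff.1 hxy with ⟨hx0, hy0⟩ | ⟨hx0, hy0⟩
  · obtain ⟨w, hw, hw0⟩ := hS.intermediate_value₂ hy hx hg continuousOn_const hy0 hx0
    exact h0 w hw hw0
  · obtain ⟨w, hw, hw0⟩ := hS.intermediate_value₂ hx hy hg continuousOn_const hx0 hy0
    exact h0 w hw hw0

lemma Convex.setOf_strictMono {m : ℕ} {I : Set ℝ} (hI : Convex ℝ I) :
    Convex ℝ {p : Fin m → ℝ | StrictMono p ∧ ∀ i, p i ∈ I} := by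
  rintro p ⟨hp, hpI⟩ q ⟨hq, hqI⟩ μ ν hμ hν hμν
  refine ⟨fun i j hij => ?_, fun i => hI (hpI i) (hqI i) hμ hν hμν⟩
  simp only [Pi.add_apply, Pi.smul_apply, smul_eq_mul]
  rcases hμ.eq_or_lt with rfl | hμ
  · simp only [zero_add] at hμν
    simpa [hμν] using hq hij
  · nlinarith [mul_lt_mul_of_pos_left (hp hij) hμ, mul_le_mul_of_nonneg_left (hq hij).le hν]

theorem Directed.exists_ne_zero_forall_mem {E ι : Type*} [NormedAddCommGroup E]
    [NormedSpace ℝ E] [FiniteDimensional ℝ E] [Nonempty ι] {C : ι → Set E}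
    (hdir : Directed (· ⊇ ·) C) (hC : ∀ i, IsClosed (C i))
    (hsmul : ∀ i, ∀ v ∈ C i, ∀ r : ℝ, 0 < r → r • v ∈ C i) (hne : ∀ i, ∃ v ≠ 0, v ∈ C i) :
    ∃ v ≠ (0 : E), ∀ i, v ∈ C i := by
  have hne' : ∀ i, (C i ∩ Metric.sphere 0 1).Nonempty := fun i => by
    obtain ⟨v, hv0, hv⟩ := hne i
    exact ⟨‖v‖⁻¹ • v, hsmul i v hv _ (by positivity), by simp [norm_smul, hv0]⟩
  obtain ⟨v, hv⟩ := IsCompact.nonempty_iInter_of_directed_nonempty_isCompact_isClosed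
    (fun i => C i ∩ Metric.sphere 0 1)
    (fun i j => (hdir i j).imp fun k hk => ⟨inter_subset_inter_left _ hk.1,
      inter_subset_inter_left _ hk.2⟩)
    hne' (fun i => (isCompact_sphere 0 1).inter_left (hC i))
    (fun i => (hC i).inter Metric.isClosed_sphere)
  rw [mem_iInter] at hv
  obtain ⟨i⟩ := ‹Nonempty ι›
  exact ⟨v, ne_zero_of_mem_unit_sphere ⟨v, (hv i).2⟩, fun i => (hv i).1⟩

noncomputable def nodesBelow {c : ℕ} (z : Fin c → ℝ) (x : ℝ) : ℕ :=
  (Finset.univ.filter fun i => z i < x).card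

section NodesBelow

variable {c : ℕ} {z : Fin c → ℝ} {x : ℝ}

lemma nodesBelow_le : nodesBelow z x ≤ c :=
  (Finset.card_filter_le _ _).trans (Finset.card_fin c).le

lemma nodesBelow_eq_zero (h : ∀ i, x ≤ z i) : nodesBelow z x = 0 :=
  Finset.card_eq_zero.2 <| Finset.filter_eq_empty_iff.2 fun i _ => (h i).not_gt

lemma nodesBelow_cons_of_lt {y : ℝ} (hy : y < x) :
    nodesBelow (Fin.cons y z : Fin (c + 1) → ℝ) x = nodesBelow z x + 1 := by
  rw [nodesBelow, nodesBelow, Finset.card_filter, Finset.card_filter, Fin.sum_univ_succ]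
  simp only [Fin.cons_zero, Fin.cons_succ, hy, if_true]
  ring

lemma nodesBelow_append_of_le {d : ℕ} {w : Fin d → ℝ} (hw : ∀ j, x ≤ w j) :
    nodesBelow (Fin.append z w) x = nodesBelow z x := by
  rw [nodesBelow, nodesBelow, Finset.card_filter, Finset.card_filter, Fin.sum_univ_add]
  simp [(hw _).not_gt]

lemma StrictMono.lt_iff_lt_nodesBelow (hz : StrictMono z) {i : Fin c} :
    z i < x ↔ (i : ℕ) < nodesBelow z x := by
  constructor
  · intro hi
    calc (i : ℕ) < (Finset.Iic i).card := by simp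
      _ ≤ nodesBelow z x := Finset.card_le_card fun j hj => by
        simpa using (hz.monotone (Finset.mem_Iic.1 hj)).trans_lt hi
  · intro hi
    by_contra! hxi
    have : nodesBelow z x ≤ (Finset.Iio i).card := Finset.card_le_card fun j hj => by
      simpa using hz.lt_iff_lt.1 ((Finset.mem_filter.1 hj).2.trans_le hxi)
    rw [Fin.card_Iio] at this
    omega

end NodesBelow

def HasAlternation (h : ℝ → ℝ) (a b s : ℝ) (k : ℕ) : Prop :=
  ∃ x : Fin k → ℝ, StrictMono x ∧ (∀ i, x i ∈ Ioo a b) ∧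
    ∀ i : Fin k, 0 < s * (-1) ^ (i : ℕ) * h (x i)

/-- `h` weakly follows on `(a, b)` a sign pattern with at most `k` sign changes relative to the
sign of `σ`: `e` counts changes placed at `a` itself, which only flip the initial sign. -/
def HasSignPattern (h : ℝ → ℝ) (a b σ : ℝ) (k : ℕ) : Prop :=
  ∃ c e, c + e ≤ k ∧ ∃ z : Fin c → ℝ, StrictMono z ∧ (∀ i, z i ∈ Ioo a b) ∧
    ∀ x ∈ Ioo a b, 0 ≤ σ * (-1) ^ (e + nodesBelow z x) * h x

section SignChanges

variable {h : ℝ → ℝ} {a b s : ℝ} {k : ℕ}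

lemma hasAlternation_cons {y : ℝ} {x : Fin k → ℝ} (hy : y ∈ Ioo a b) (hsy : 0 < s * h y)
    (hx : StrictMono x) (hxI : ∀ i, x i ∈ Ioo a b) (hyx : ∀ i, y < x i)
    (halt : ∀ i : Fin k, 0 < -s * (-1) ^ (i : ℕ) * h (x i)) : HasAlternation h a b s (k + 1) :=
  ⟨Fin.cons y x, Fin.strictMono_cons.2 ⟨hyx, hx⟩, Fin.cases hy hxI,
    Fin.cases (by simpa using hsy) fun i => by
      convert halt i using 1
      simp only [Fin.cons_succ, Fin.val_succ, pow_succ]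
      ring⟩

lemma hasAlternation_one {y : ℝ} (hy : y ∈ Ioo a b) (hsy : 0 < s * h y) :
    HasAlternation h a b s 1 :=
  hasAlternation_cons (x := Fin.elim0) hy hsy (fun i => i.elim0) (fun i => i.elim0)
    (fun i => i.elim0) fun i => i.elim0

/-- Of two alternations of the same length starting with opposite signs, the one whose first
point comes first can be prepended to the other. -/
lemma HasAlternation.not_hasAlternation_neg (halt : HasAlternation h a b s (k + 1))
    (hs : ¬ HasAlternation h a b s (k + 2)) (hns : ¬ HasAlternation h a b (-s) (k + 2)) :
    ¬ HasAlternation h a b (-s) (k + 1) := by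
  obtain ⟨y, hy, hyI, hyalt⟩ := halt
  rintro ⟨w, hw, hwI, hwalt⟩
  have hy0 := hyalt 0
  have hw0 := hwalt 0
  simp only [Fin.val_zero, pow_zero, mul_one] at hy0 hw0
  rcases lt_trichotomy (y 0) (w 0) with hlt | heq | hgt
  · exact hs <| hasAlternation_cons (hyI 0) hy0 hw hwI
      (fun i => hlt.trans_le (hw.monotone (Fin.zero_le i))) hwalt
  · rw [heq] at hy0
    linarith
  · exact hns <| hasAlternation_cons (hwI 0) hw0 hy hyI
      (fun i => hgt.trans_le (hy.monotone (Fin.zero_le i))) (by simpa using hyalt)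

lemma HasSignPattern.of_nonneg (hnonneg : ∀ x ∈ Ioo a b, 0 ≤ s * h x) :
    HasSignPattern h a b s k :=
  ⟨0, 0, Nat.zero_le _, Fin.elim0, fun i => i.elim0, fun i => i.elim0, fun x hx => by
    simpa [nodesBelow_eq_zero fun i : Fin 0 => i.elim0] using hnonneg x hx⟩

/-- `z₁` becomes a new sign change, unless the parity of `e` absorbs it. -/
lemma HasSignPattern.glue {z₁ : ℝ} (hz₁ : z₁ ∈ Ico a b)
    (hleft : ∀ x ∈ Ioo a b, x ≤ z₁ → 0 ≤ s * h x) (hright : HasSignPattern h z₁ b (-s) k) :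
    HasSignPattern h a b s (k + 1) := by
  obtain ⟨c, e, hce, z, hz, hzI, hpat⟩ := hright
  have hzI' : ∀ i, z i ∈ Ioo a b := fun i => ⟨hz₁.1.trans_lt (hzI i).1, (hzI i).2⟩
  have hK : ∀ x ≤ z₁, nodesBelow z x = 0 := fun x hx =>
    nodesBelow_eq_zero fun i => hx.trans (hzI i).1.le
  by_cases hcons : a < z₁ ∧ Even e
  · refine ⟨c + 1, e, by omega, Fin.cons z₁ z, Fin.strictMono_cons.2 ⟨fun i => (hzI i).1, hz⟩,
      Fin.cases ⟨hcons.1, hz₁.2⟩ hzI', fun x hx => ?_⟩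
    rcases le_or_gt x z₁ with hxz | hxz
    · rw [nodesBelow_eq_zero, add_zero, hcons.2.neg_one_pow, mul_one]
      · exact hleft x hx hxz
      · exact Fin.cases hxz fun i => hxz.trans (hzI i).1.le
    · rw [nodesBelow_cons_of_lt hxz]
      convert hpat x ⟨hxz, hx.2⟩ using 1
      ring
  · refine ⟨c, e + 1, by omega, z, hz, hzI', fun x hx => ?_⟩
    rcases le_or_gt x z₁ with hxz | hxz
    · have he : Odd e := Nat.not_even_iff_odd.1 fun he => hcons ⟨hx.1.trans_le hxz, he⟩
      rw [hK x hxz, add_zero, (he.add_one).neg_one_pow, mul_one]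
      exact hleft x hx hxz
    · convert hpat x ⟨hxz, hx.2⟩ using 1
      ring

/-- Left of the infimum `z₁` of the points where `s * h > 0` we have `s * h ≤ 0`, and right of it
there are no `k + 1` alternations starting with `-s`, since a point of positivity of `s * h`
could be put in front of them. -/
theorem hasSignPattern_of_not_hasAlternation (hh : Continuous h)
    (hno : ¬ HasAlternation h a b s (k + 1)) : HasSignPattern h a b (-s) k := by
  induction k generalizing a s with
  | zero =>
    refine HasSignPattern.of_nonneg fun x hx => ?_
    have := mt (hasAlternation_one hx) hno
    linarith
  | succ k ih =>
    by_cases hS : ∃ y ∈ Ioo a b, 0 < s * h y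
    swap
    · push Not at hS
      exact HasSignPattern.of_nonneg fun x hx => by linarith [hS x hx]
    set S := {y ∈ Ioo a b | 0 < s * h y}
    obtain ⟨y, hyS⟩ : S.Nonempty := hS
    have hSbdd : BddBelow S := ⟨a, fun y hy => hy.1.1.le⟩
    have hz₁ : sInf S ∈ Ico a b :=
      ⟨le_csInf ⟨y, hyS⟩ fun y hy => hy.1.1.le, (csInf_le hSbdd hyS).trans_lt hyS.1.2⟩
    have hleft : ∀ x ∈ Ioo a b, x < sInf S → 0 ≤ -s * h x := fun x hx hxS => by
      have : ¬ 0 < s * h x := fun hsx => notMem_of_lt_csInf hxS hSbdd ⟨hx, hsx⟩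
      linarith
    have hno' : ¬ HasAlternation h (sInf S) b (-s) (k + 1) := by
      rintro ⟨x, hx, hxI, halt⟩
      obtain ⟨y, hyS, hyx⟩ := exists_lt_of_csInf_lt ⟨y, hyS⟩ (hxI 0).1
      exact hno <| hasAlternation_cons hyS.1 hyS.2 hx
        (fun i => ⟨hz₁.1.trans_lt (hxI i).1, (hxI i).2⟩)
        (fun i => hyx.trans_le (hx.monotone (Fin.zero_le i))) (by simpa using halt)
    refine HasSignPattern.glue hz₁ (fun x hx hxS => ?_) (by simpa using ih hno')
    rcases hxS.lt_or_eq with hxS | rfl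
    · exact hleft x hx hxS
    · exact nonneg_of_nonneg_on_Ioo (by fun_prop) hx.1 (fun y hy => hleft y
        ⟨hy.1, hy.2.trans hx.2⟩ hy.2) (right_mem_Icc.2 hx.1.le)

theorem exists_signPattern_of_forall_not_hasAlternation (hh : Continuous h)
    (hne : ∃ x ∈ Ioo a b, h x ≠ 0) {n : ℕ}
    (hno : ∀ s, (s = 1 ∨ s = -1) → ¬ HasAlternation h a b s (n + 1)) :
    ∃ c < n, ∃ z : Fin c → ℝ, StrictMono z ∧ (∀ i, z i ∈ Ioo a b) ∧
      ∃ σ ≠ 0, ∀ x ∈ Ioo a b, 0 ≤ σ * (-1) ^ nodesBelow z x * h x := by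
  classical
  have hex : ∃ k, ∀ s, (s = 1 ∨ s = -1) → ¬ HasAlternation h a b s (k + 1) := ⟨n, hno⟩
  have hkn : Nat.find hex ≤ n := Nat.find_min' hex hno
  obtain ⟨x₀, hx₀, hhx₀⟩ := hne
  obtain ⟨k, hk⟩ : ∃ k, Nat.find hex = k + 1 := by
    refine Nat.exists_eq_succ_of_ne_zero fun h0 => ?_
    have hno₁ := h0 ▸ Nat.find_spec hex
    rcases hhx₀.lt_or_gt with hneg | hpos
    · exact hno₁ (-1) (Or.inr rfl) (hasAlternation_one hx₀ (by linarith))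
    · exact hno₁ 1 (Or.inl rfl) (hasAlternation_one hx₀ (by linarith))
  have hmax := hk ▸ Nat.find_spec hex
  obtain ⟨s, hs, halt⟩ : ∃ s, (s = 1 ∨ s = -1) ∧ HasAlternation h a b s (k + 1) := by
    have := Nat.find_min hex (show k < Nat.find hex by omega)
    push Not at this
    exact this
  have hns : -s = 1 ∨ -s = -1 := by rcases hs with rfl | rfl <;> norm_num
  obtain ⟨c, e, hce, z, hz, hzI, hpat⟩ := hasSignPattern_of_not_hasAlternation hh
    (halt.not_hasAlternation_neg (hmax s hs) (hmax (-s) hns))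
  refine ⟨c, by omega, z, hz, hzI, s * (-1) ^ e,
    mul_ne_zero (by rcases hs with rfl | rfl <;> norm_num) (pow_ne_zero _ (by norm_num)),
    fun x hx => ?_⟩
  convert hpat x hx using 1
  ring

end SignChanges

noncomputable def collocationDet {m : ℕ} (f : Fin m → ℝ → ℝ) (p : Fin m → ℝ) : ℝ :=
  (Matrix.of fun i j => f j (p i)).det

def IsHaarOn {m : ℕ} (f : Fin m → ℝ → ℝ) (I : Set ℝ) : Prop :=
  ∀ p : Fin m → ℝ, StrictMono p → (∀ i, p i ∈ I) → collocationDet f p ≠ 0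

section Collocation

variable {m : ℕ}

lemma IsHaarOn.mono {f : Fin m → ℝ → ℝ} {I J : Set ℝ} (hHaar : IsHaarOn f I) (hJI : J ⊆ I) :
    IsHaarOn f J :=
  fun p hp hpJ => hHaar p hp fun i => hJI (hpJ i)

lemma isHaarOn_of_ncard_zeros_le {f : Fin (m + 1) → ℝ → ℝ} {I : Set ℝ}
    (hzeros : ∀ v : Fin (m + 1) → ℝ, v ≠ 0 → {x ∈ I | ∑ j, v j * f j x = 0}.Finite ∧
      {x ∈ I | ∑ j, v j * f j x = 0}.ncard ≤ m) : IsHaarOn f I := by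
  intro p hp hpI hdet
  obtain ⟨v, hv, hMv⟩ := Matrix.exists_mulVec_eq_zero_iff.2 hdet
  obtain ⟨hfin, hcard⟩ := hzeros v hv
  have hsub : range p ⊆ {x ∈ I | ∑ j, v j * f j x = 0} := by
    rintro _ ⟨i, rfl⟩
    exact ⟨hpI i, by simpa [Matrix.mulVec, dotProduct, mul_comm] using congrFun hMv i⟩
  have := ncard_le_ncard hsub hfin
  rw [ncard_range_of_injective hp.injective, Nat.card_eq_fintype_card, Fintype.card_fin] at this
  omega

lemma continuous_collocationDet {f : Fin m → ℝ → ℝ} (hf : ∀ j, Continuous (f j)) :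
    Continuous (collocationDet f) :=
  Continuous.matrix_det <| continuous_matrix fun i j => (hf j).comp (continuous_apply i)

lemma collocationDet_mul_pos {f : Fin m → ℝ → ℝ} (hf : ∀ j, Continuous (f j)) {I : Set ℝ}
    (hI : Convex ℝ I) (hHaar : IsHaarOn f I) {p q : Fin m → ℝ} (hp : StrictMono p)
    (hpI : ∀ i, p i ∈ I) (hq : StrictMono q) (hqI : ∀ i, q i ∈ I) :
    0 < collocationDet f p * collocationDet f q :=
  hI.setOf_strictMono.isPreconnected.mul_pos_of_ne_zero
    (continuous_collocationDet hf).continuousOn (fun p hp => hHaar p hp.1 hp.2) ⟨hp, hpI⟩ ⟨hq, hqI⟩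

variable {f : Fin (m + 1) → ℝ → ℝ} {t : Fin m → ℝ}

lemma collocationDet_cons_of_mem_range {x : ℝ} (hx : x ∈ range t) :
    collocationDet f (Fin.cons x t) = 0 := by
  obtain ⟨i, rfl⟩ := hx
  exact Matrix.det_zero_of_row_eq (Fin.succ_ne_zero i).symm (by ext j; simp)

lemma collocationDet_cons_eq_sum (t : Fin m → ℝ) (x : ℝ) :
    collocationDet f (Fin.cons x t) =
      ∑ j : Fin (m + 1),
        (-1) ^ (j : ℕ) * collocationDet (fun k => f (j.succAbove k)) t * f j x := by
  rw [collocationDet, Matrix.det_succ_row_zero]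
  refine Finset.sum_congr rfl fun j _ => ?_
  simp only [collocationDet, Matrix.of_apply, Fin.cons_zero, Matrix.submatrix, Fin.cons_succ]
  ring

lemma collocationDet_cons_eq_insertNth (q : Fin (m + 1)) (t : Fin m → ℝ) (x : ℝ) :
    collocationDet f (Fin.cons x t) = (-1) ^ (q : ℕ) * collocationDet f (q.insertNth x t) := by
  have : (Matrix.of fun i j => f j ((Fin.cons x t : Fin (m + 1) → ℝ) i)) =
      (Matrix.of fun i j => f j ((q.insertNth x t : Fin (m + 1) → ℝ) i)).submatrix
        q.cycleRange.symm id := by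
    ext i j
    simp only [Matrix.of_apply, Matrix.submatrix_apply, id, Fin.insertNth_apply_cycleRange_symm]
  rw [collocationDet, this, Matrix.det_permute, Equiv.Perm.sign_symm, Fin.sign_cycleRange]
  simp [collocationDet]

lemma strictMono_insertNth_nodesBelow (ht : StrictMono t) {x : ℝ} (hxt : x ∉ range t) :
    StrictMono ((⟨nodesBelow t x, Nat.lt_succ_of_le nodesBelow_le⟩ : Fin (m + 1)).insertNth x t :
      Fin (m + 1) → ℝ) := by
  refine (Fin.strictMono_insertNth_iff _ _ _).2 ⟨ht, fun i hi => ?_, fun i hi => ?_⟩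
  · exact ht.lt_iff_lt_nodesBelow.2 hi
  · have : ¬ t i < x := fun h => (Fin.le_def.1 hi).not_gt (ht.lt_iff_lt_nodesBelow.1 h)
    exact (not_lt.1 this).lt_of_ne fun h => hxt ⟨i, h.symm⟩

/-- Inserting `x` at its place among the nodes `t` turns `(-1) ^ nodesBelow t x * D(x, t)` into
the determinant of an increasing tuple, whose sign does not depend on `x`. -/
lemma collocationDet_cons_mul_pos (hf : ∀ j, Continuous (f j)) {I : Set ℝ} (hI : Convex ℝ I)
    (hHaar : IsHaarOn f I) (ht : StrictMono t) (htI : ∀ i, t i ∈ I) {x y : ℝ} (hx : x ∈ I)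
    (hxt : x ∉ range t) (hy : y ∈ I) (hyt : y ∉ range t) :
    0 < (-1) ^ nodesBelow t x * collocationDet f (Fin.cons x t) *
      ((-1) ^ nodesBelow t y * collocationDet f (Fin.cons y t)) := by
  have key : ∀ x ∈ I, x ∉ range t → ∃ p, StrictMono p ∧ (∀ i, p i ∈ I) ∧
      (-1) ^ nodesBelow t x * collocationDet f (Fin.cons x t) = collocationDet f p := by
    intro x hx hxt
    set q : Fin (m + 1) := ⟨nodesBelow t x, Nat.lt_succ_of_le nodesBelow_le⟩
    refine ⟨q.insertNth x t, strictMono_insertNth_nodesBelow ht hxt,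
      (Fin.forall_iff_succAbove q).2 ⟨by simpa using hx, by simpa using htI⟩, ?_⟩
    rw [collocationDet_cons_eq_insertNth q, ← mul_assoc, ← pow_add,
      Even.neg_one_pow ⟨_, rfl⟩, one_mul]
  obtain ⟨p, hp, hpI, hpx⟩ := key x hx hxt
  obtain ⟨p', hp', hp'I, hp'y⟩ := key y hy hyt
  rw [hpx, hp'y]
  exact collocationDet_mul_pos hf hI hHaar hp hpI hp' hp'I

end Collocation

section SignPattern

variable {c d : ℕ} {f : Fin (c + d + 1) → ℝ → ℝ} {a b : ℝ} {z : Fin c → ℝ}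

/-- The nodes `z` are completed by `d` nodes beyond `β`; the resulting determinant in `x` has the
sign pattern of `z` up to `β`. -/
lemma exists_coeffs_signPattern_of_le (hf : ∀ j, Continuous (f j)) (hab : a < b)
    (hHaar : IsHaarOn f (Ioo a b)) (hz : StrictMono z) (hzI : ∀ i, z i ∈ Ioo a b) {β : ℝ}
    (hβ : β < b) : ∃ v : Fin (c + d + 1) → ℝ, v ≠ 0 ∧
      ∀ x ∈ Ioo a b, x ≤ β → 0 ≤ (-1) ^ nodesBelow z x * ∑ j, v j * f j x := by
  obtain ⟨β', ⟨hββ', -⟩, ⟨haβ', hβ'b⟩, hzβ'⟩ := ((show ∀ᶠ y in 𝓝[<] b, y ∈ Ioo β b from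
    Ioo_mem_nhdsLT hβ).and ((show ∀ᶠ y in 𝓝[<] b, y ∈ Ioo a b from Ioo_mem_nhdsLT hab).and
    (Filter.eventually_all.2 fun i => (show ∀ᶠ y in 𝓝[<] b, y ∈ Ioo (z i) b from
      Ioo_mem_nhdsLT (hzI i).2).mono fun y hy => hy.1))).exists
  obtain ⟨w, hw, hwI⟩ := exists_strictMono_mem_Ioo hβ'b d
  set t := Fin.append z w
  have ht : StrictMono t := hz.finAppend hw fun i j => (hzβ' i).trans (hwI j).1
  have htI : ∀ i, t i ∈ Ioo a b := Fin.addCases (by simpa [t] using hzI)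
    (fun j => by simpa [t] using (⟨haβ'.trans (hwI j).1, (hwI j).2⟩ : w j ∈ Ioo a b))
  obtain ⟨x₁, hx₁, hx₁t⟩ := ((Ioo_infinite hab).sdiff (finite_range t)).nonempty
  have hpos := fun x (hx : x ∈ Ioo a b) (hxt : x ∉ range t) =>
    collocationDet_cons_mul_pos hf (convex_Ioo a b) hHaar ht htI hx hxt hx₁ hx₁t
  set P := (-1) ^ nodesBelow t x₁ * collocationDet f (Fin.cons x₁ t)
  have hsum : ∀ x, ∑ j : Fin (c + d + 1), P *
      ((-1) ^ (j : ℕ) * collocationDet (fun k => f (j.succAbove k)) t) * f j x =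
      P * collocationDet f (Fin.cons x t) := by
    intro x
    rw [collocationDet_cons_eq_sum, Finset.mul_sum]
    exact Finset.sum_congr rfl fun j _ => by ring
  refine ⟨fun j => P * ((-1) ^ (j : ℕ) * collocationDet (fun k => f (j.succAbove k)) t),
    fun h0 => ?_, fun x hx hxβ => ?_⟩
  · have hP : 0 < P * P := hpos x₁ hx₁ hx₁t
    have : P * collocationDet f (Fin.cons x₁ t) = 0 := by
      rw [← hsum]
      exact Finset.sum_eq_zero fun j _ => by rw [show P * _ = 0 from congrFun h0 j, zero_mul]
    rcases mul_eq_zero.1 this with h | h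
    · simp [h] at hP
    · simp [P, h] at hP
  · rw [hsum, ← nodesBelow_append_of_le (w := w) fun j => hxβ.trans (hββ'.trans (hwI j).1).le]
    by_cases hxt : x ∈ range t
    · simp [collocationDet_cons_of_mem_range hxt]
    · linarith [hpos x hx hxt]

/-- The extra nodes are pushed towards `b`: the coefficient vectors that work up to `β` form
closed cones, nested as `β` increases. -/
theorem exists_coeffs_signPattern (hf : ∀ j, Continuous (f j)) (hab : a < b)
    (hHaar : IsHaarOn f (Ioo a b)) (hz : StrictMono z) (hzI : ∀ i, z i ∈ Ioo a b) :
    ∃ v : Fin (c + d + 1) → ℝ, v ≠ 0 ∧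
      ∀ x ∈ Ioo a b, 0 ≤ (-1) ^ nodesBelow z x * ∑ j, v j * f j x := by
  have : Nonempty (Iio b) := ⟨⟨a, hab⟩⟩
  obtain ⟨v, hv, hvC⟩ := Directed.exists_ne_zero_forall_mem
    (C := fun β : Iio b => {v : Fin (c + d + 1) → ℝ |
      ∀ x ∈ Ioo a b, x ≤ β → 0 ≤ (-1) ^ nodesBelow z x * ∑ j, v j * f j x})
    (Antitone.directed_ge fun β β' hββ' v hv x hx hxβ => hv x hx (hxβ.trans hββ'))
    (fun β => by
      simp only [ofPred_forall]
      exact isClosed_iInter fun x => isClosed_iInter fun _ => isClosed_iInter fun _ =>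
        isClosed_le continuous_const (by fun_prop))
    (fun β v hv r hr x hx hxβ => by
      simpa [Finset.mul_sum, mul_assoc, mul_left_comm] using mul_nonneg hr.le (hv x hx hxβ))
    (fun β => exists_coeffs_signPattern_of_le hf hab hHaar hz hzI β.2)
  exact ⟨v, hv, fun x hx => hvC ⟨x, hx.2⟩ x hx le_rfl⟩

theorem exists_mem_ne_zero_signPattern {V : Submodule ℝ (ℝ → ℝ)}
    (B : Module.Basis (Fin (c + d + 1)) ℝ V) (hcont : ∀ g ∈ V, Continuous g) (hab : a < b)
    (hzeros : ∀ g ∈ V, g ≠ 0 →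
      {x ∈ Ico a b | g x = 0}.Finite ∧ {x ∈ Ico a b | g x = 0}.ncard ≤ c + d)
    (hz : StrictMono z) (hzI : ∀ i, z i ∈ Ioo a b) :
    ∃ g ∈ V, g ≠ 0 ∧ ∀ x ∈ Ioo a b, 0 ≤ (-1) ^ nodesBelow z x * g x := by
  set f : Fin (c + d + 1) → ℝ → ℝ := fun j => B j
  have hcomb : ∀ v : Fin (c + d + 1) → ℝ,
      ((∑ j, v j • B j : V) : ℝ → ℝ) = fun x => ∑ j, v j * f j x := by
    intro v
    ext x
    simp [f, Finset.sum_apply]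
  have hcomb_ne : ∀ v : Fin (c + d + 1) → ℝ, v ≠ 0 → ((∑ j, v j • B j : V) : ℝ → ℝ) ≠ 0 :=
    fun v hv h0 => hv (funext (Fintype.linearIndependent_iff.1 B.linearIndependent v
      (Submodule.coe_eq_zero.1 h0)))
  have hHaar : IsHaarOn f (Ico a b) := isHaarOn_of_ncard_zeros_le fun v hv => by
    simpa [hcomb] using hzeros _ (∑ j, v j • B j).2 (hcomb_ne v hv)
  obtain ⟨v, hv, hpat⟩ := exists_coeffs_signPattern (fun j => hcont _ (B j).2) hab
    (hHaar.mono Ioo_subset_Ico_self) hz hzI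
  exact ⟨_, (∑ j, v j • B j).2, hcomb_ne v hv, by simpa [hcomb] using hpat⟩

end SignPattern

theorem integral_mul_ne_zero_of_signPattern {h g : ℝ → ℝ} (hh : Continuous h)
    (hg : Continuous g) {a b : ℝ} (hab : a < b) {σ : ℝ} (hσ : σ ≠ 0) {K : ℝ → ℕ}
    (hhK : ∀ x ∈ Ioo a b, 0 ≤ σ * (-1) ^ K x * h x) (hgK : ∀ x ∈ Ioo a b, 0 ≤ (-1) ^ K x * g x)
    (hhne : ∃ x ∈ Ioo a b, h x ≠ 0) (hgz : {x ∈ Ioo a b | g x = 0}.Finite) :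
    ∫ x in a..b, h x * g x ≠ 0 := by
  have hpos : ∀ x ∈ Ioo a b, 0 ≤ σ * (h x * g x) := fun x hx => by
    have hK : ((-1 : ℝ) ^ K x) * (-1) ^ K x = 1 := by rw [← pow_add, Even.neg_one_pow ⟨_, rfl⟩]
    calc 0 ≤ σ * (-1) ^ K x * h x * ((-1) ^ K x * g x) := mul_nonneg (hhK x hx) (hgK x hx)
      _ = σ * (h x * g x) := by linear_combination σ * (h x * g x) * hK
  obtain ⟨w, ⟨hwI, hhw⟩, hgw⟩ := (hgz.countable.dense_compl ℝ).inter_open_nonempty _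
    (isOpen_Ioo.inter (isOpen_ne_fun hh continuous_const)) hhne
  have hgw : g w ≠ 0 := fun h0 => hgw ⟨hwI, h0⟩
  have hΦ : Continuous fun x => σ * (h x * g x) := by fun_prop
  have hint : 0 < ∫ x in a..b, σ * (h x * g x) :=
    intervalIntegral.integral_pos hab hΦ.continuousOn
      (fun x hx => nonneg_of_nonneg_on_Ioo hΦ hab hpos (Ioc_subset_Icc_self hx))
      ⟨w, Ioo_subset_Icc_self hwI, (hpos w hwI).lt_of_ne
        (mul_ne_zero hσ (mul_ne_zero hhw hgw)).symm⟩
  rw [intervalIntegral.integral_const_mul] at hint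
  intro h0
  simp [h0] at hint

theorem sturm_hurwitz_kellogg_general (n : ℕ) (V : Submodule ℝ (ℝ → ℝ))
    (hVdim : Module.finrank ℝ V = n)
    (hVcont : ∀ g ∈ V, Continuous g ∧ Function.Periodic g (2 * π))
    (hCheb : ∀ g ∈ V, g ≠ 0 →
      {x ∈ Set.Ico (0 : ℝ) (2 * π) | g x = 0}.Finite ∧
      {x ∈ Set.Ico (0 : ℝ) (2 * π) | g x = 0}.ncard ≤ n - 1)
    (h : ℝ → ℝ) (hh : Continuous h) (hper : Function.Periodic h (2 * π))
    (hne : ∃ x, h x ≠ 0)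
    (horth : ∀ g ∈ V, ∫ x in (0 : ℝ)..(2 * π), h x * g x = 0) :
    ∃ x : Fin (n + 1) → ℝ, StrictMono x ∧ (∀ i, x i ∈ Set.Ico (0 : ℝ) (2 * π)) ∧
      ∃ e : ℝ, (e = 1 ∨ e = -1) ∧
        ∀ i : Fin (n + 1), 0 < e * (-1) ^ (i : ℕ) * h (x i) := by
  by_contra hcon
  have hπ : (0 : ℝ) < 2 * π := by positivity
  have hne' := hper.exists_mem_Ioo_ne_zero hπ hh hne
  obtain ⟨c, hcn, z, hz, hzI, σ, hσ, hpat⟩ :=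
    exists_signPattern_of_forall_not_hasAlternation hh hne' fun s hs ⟨x, hx, hxI, halt⟩ =>
      hcon ⟨x, hx, fun i => Ioo_subset_Ico_self (hxI i), s, hs, halt⟩
  obtain ⟨d, rfl⟩ := Nat.exists_eq_add_of_lt hcn
  have : Module.Finite ℝ V := Module.finite_of_finrank_pos (by omega)
  have hzeros : ∀ g ∈ V, g ≠ 0 → {x ∈ Ico 0 (2 * π) | g x = 0}.Finite ∧
      {x ∈ Ico 0 (2 * π) | g x = 0}.ncard ≤ c + d := fun g hg hg0 => by
    simpa using hCheb g hg hg0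
  obtain ⟨g, hgV, hg0, hgpat⟩ := exists_mem_ne_zero_signPattern
    (Module.finBasisOfFinrankEq ℝ V hVdim) (fun g hg => (hVcont g hg).1) hπ hzeros hz hzI
  exact integral_mul_ne_zero_of_signPattern hh (hVcont g hgV).1 hπ hσ hpat hgpat hne'
    ((hzeros g hgV hg0).1.subset fun x hx => ⟨Ioo_subset_Ico_self hx.1, hx.2⟩) (horth g hgV)

/-- **Sturm–Hurwitz–Kellogg theorem.** If `V` is an `n`-dimensional Chebyshev system of
continuous `2π`-periodic functions (every nonzero element has at most `n-1` zeros in a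
period) and `h` is a nonzero continuous `2π`-periodic function `L²`-orthogonal to `V`,
then `h` has at least `n+1` sign changes: there are `n+1` ordered points in `[0, 2π)` at
which `h` takes nonzero values of alternating signs. -/
theorem sturm_hurwitz_kellogg (n : ℕ) (V : Submodule ℝ (ℝ → ℝ))
    (hVfd : FiniteDimensional ℝ V) (hVdim : Module.finrank ℝ V = n)
    (hVcont : ∀ g ∈ V, Continuous g ∧ Function.Periodic g (2 * π))
    (hCheb : ∀ g ∈ V, g ≠ 0 →
      {x ∈ Set.Ico (0 : ℝ) (2 * π) | g x = 0}.Finite ∧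
      {x ∈ Set.Ico (0 : ℝ) (2 * π) | g x = 0}.ncard ≤ n - 1)
    (h : ℝ → ℝ) (hh : Continuous h) (hper : Function.Periodic h (2 * π))
    (hne : ∃ x, h x ≠ 0)
    (horth : ∀ g ∈ V, ∫ x in (0 : ℝ)..(2 * π), h x * g x = 0) :
    ∃ x : Fin (n + 1) → ℝ, StrictMono x ∧ (∀ i, x i ∈ Set.Ico (0 : ℝ) (2 * π)) ∧
      ∃ e : ℝ, (e = 1 ∨ e = -1) ∧
        ∀ i : Fin (n + 1), 0 < e * (-1) ^ (i : ℕ) * h (x i) :=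
  sturm_hurwitz_kellogg_general n V hVdim hVcont hCheb h hh hper hne horth
end

section
/- The map F : S^n → V* defined by ⟨F(x), g⟩ = ∫₀¹ h_x(t) g(t) dt, where h_x is the step function taking value sign(xᵢ) on the interval of length xᵢ² determined by x = (x₀,…,xₙ) ∈ S^n, is continuous and odd, i.e., F(−x) = −F(x) for all x ∈ S^n. -/
/-! On the sphere all partial sums `∑_{j ≤ i} xⱼ²` lie in `[0, 1]`, so the `i`-th term of the
pairing is `sign xᵢ · (Φ(bᵢ(x)) - Φ(aᵢ(x)))`, with `Φ` the (continuous) primitive of `g` on `[0,1]`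
and `aᵢ ≤ bᵢ` the continuous endpoints of the `i`-th interval. The factor `sign xᵢ` is locally
constant off `xᵢ = 0`, and where `xᵢ = 0` the interval is degenerate, so the bounded sign is
multiplied by a continuous factor that vanishes there. Oddness is termwise: `sign` is odd and
the interval lengths `xᵢ²` are even. -/

open MeasureTheory

/-- The pairing `⟨F(x), g⟩ = ∫₀¹ h_x g`, where `h_x` is the step function taking the
value `sign (xᵢ)` on the `i`-th consecutive interval of length `xᵢ²` of `[0,1]`. -/
noncomputable def hobbyRicePairing (n : ℕ) (x : Fin (n + 1) → ℝ) (g : ℝ → ℝ) : ℝ :=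
  ∑ i : Fin (n + 1), Real.sign (x i) *
    ∫ s in (∑ j ∈ Finset.Iio i, x j ^ 2)..(∑ j ∈ Finset.Iic i, x j ^ 2), g s

open Finset Filter Topology

lemma sum_sq_mem_Icc_of_sum_sq_eq_one {ι : Type*} [Fintype ι] {x : ι → ℝ}
    (hx : ∑ i, x i ^ 2 = 1) (s : Finset ι) : ∑ j ∈ s, x j ^ 2 ∈ Set.Icc (0 : ℝ) 1 :=
  ⟨sum_nonneg fun _ _ => sq_nonneg _,
    hx ▸ sum_le_sum_of_subset_of_nonneg (subset_univ s) fun _ _ _ => sq_nonneg _⟩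

namespace Real

lemma abs_sign_le_one (r : ℝ) : |sign r| ≤ 1 := by
  rcases sign_apply_eq r with h | h | h <;> simp [h]

lemma continuousAt_sign_of_ne_zero {a : ℝ} (ha : a ≠ 0) : ContinuousAt sign a := by
  rcases ha.lt_or_gt with ha | ha
  · exact continuousAt_const.congr <| (eventually_lt_nhds ha).mono fun y hy =>
      (sign_of_neg ha).trans (sign_of_neg hy).symm
  · exact continuousAt_const.congr <| (eventually_gt_nhds ha).mono fun y hy =>
      (sign_of_pos ha).trans (sign_of_pos hy).symm

end Real

lemma ContinuousWithinAt.sign_mul {X : Type*} [TopologicalSpace X] {u v : X → ℝ} {s : Set X}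
    {x : X} (hu : ContinuousWithinAt u s x) (hv : ContinuousWithinAt v s x)
    (hzero : u x = 0 → v x = 0) :
    ContinuousWithinAt (fun y => Real.sign (u y) * v y) s x := by
  by_cases hux : u x = 0
  · have hsign : IsBoundedUnder (· ≤ ·) (𝓝[s] x) ((‖·‖) ∘ fun y => Real.sign (u y)) :=
      isBoundedUnder_of ⟨1, fun y => (Real.norm_eq_abs _).trans_le (Real.abs_sign_le_one (u y))⟩
    have hv0 : Tendsto v (𝓝[s] x) (𝓝 0) := hzero hux ▸ hv
    rw [ContinuousWithinAt, hux, Real.sign_zero, zero_mul]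
    exact isBoundedUnder_le_mul_tendsto_zero hsign hv0
  · exact ((Real.continuousAt_sign_of_ne_zero hux).comp_continuousWithinAt hu).mul hv

lemma intervalIntegral_eq_sub_of_integrableOn_Icc {g : ℝ → ℝ} {μ : Measure ℝ} {a b c d : ℝ}
    (hg : IntegrableOn g (Set.Icc c d) μ) (ha : a ∈ Set.Icc c d) (hb : b ∈ Set.Icc c d) :
    ∫ t in a..b, g t ∂μ = (∫ t in c..b, g t ∂μ) - ∫ t in c..a, g t ∂μ := by
  have hc : c ∈ Set.Icc c d := Set.left_mem_Icc.2 (ha.1.trans ha.2)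
  have hint : ∀ e ∈ Set.Icc c d, IntervalIntegrable g μ c e := fun e he =>
    (hg.mono_set (Set.uIcc_subset_Icc hc he)).intervalIntegrable
  exact (intervalIntegral.integral_interval_sub_left (hint b hb) (hint a ha)).symm

lemma continuousOn_sign_mul_sub_comp_partialSums {ι : Type*} [Fintype ι] [LinearOrder ι]
    [LocallyFiniteOrderBot ι] {Φ : ℝ → ℝ} (hΦ : ContinuousOn Φ (Set.Icc 0 1)) (i : ι) :
    ContinuousOn (fun x : ι → ℝ => Real.sign (x i) *
        (Φ (∑ j ∈ Iic i, x j ^ 2) - Φ (∑ j ∈ Iio i, x j ^ 2)))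
      {x | ∑ j, x j ^ 2 = 1} := by
  have hcomp (s : Finset ι) :
      ContinuousOn (fun x : ι → ℝ => Φ (∑ j ∈ s, x j ^ 2)) {x | ∑ j, x j ^ 2 = 1} :=
    hΦ.comp (by fun_prop) fun x hx => sum_sq_mem_Icc_of_sum_sq_eq_one hx s
  intro x hx
  refine (continuous_apply i).continuousWithinAt.sign_mul ((hcomp _).sub (hcomp _) x hx)
    fun hxi => ?_
  simp [← sum_Iio_add_eq_sum_Iic, hxi]

lemma hobbyRicePairing_eq_sum_sign_mul_sub {n : ℕ} {g : ℝ → ℝ}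
    (hg : IntegrableOn g (Set.Icc 0 1)) {x : Fin (n + 1) → ℝ} (hx : ∑ i, x i ^ 2 = 1) :
    hobbyRicePairing n x g = ∑ i, Real.sign (x i) *
      ((∫ t in (0 : ℝ)..∑ j ∈ Iic i, x j ^ 2, g t) - ∫ t in (0 : ℝ)..∑ j ∈ Iio i, x j ^ 2, g t) :=
  sum_congr rfl fun _ _ => congrArg _ <| intervalIntegral_eq_sub_of_integrableOn_Icc hg
    (sum_sq_mem_Icc_of_sum_sq_eq_one hx _) (sum_sq_mem_Icc_of_sum_sq_eq_one hx _)

lemma continuousOn_hobbyRicePairing (n : ℕ) {g : ℝ → ℝ} (hg : IntegrableOn g (Set.Icc 0 1)) :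
    ContinuousOn (fun x => hobbyRicePairing n x g) {x : Fin (n + 1) → ℝ | ∑ i, x i ^ 2 = 1} := by
  have hprimitive : ContinuousOn (fun u => ∫ t in (0 : ℝ)..u, g t) (Set.Icc 0 1) := by
    simpa [Set.uIcc_of_le zero_le_one] using
      intervalIntegral.continuousOn_primitive_interval (a := 0) (b := 1)
        (by rwa [Set.uIcc_of_le zero_le_one])
  refine (continuousOn_finsetSum univ fun i _ =>
    continuousOn_sign_mul_sub_comp_partialSums hprimitive i).congr fun x hx => ?_
  simpa using hobbyRicePairing_eq_sum_sign_mul_sub hg hx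

lemma hobbyRicePairing_neg (n : ℕ) (x : Fin (n + 1) → ℝ) (g : ℝ → ℝ) :
    hobbyRicePairing n (-x) g = -hobbyRicePairing n x g := by
  simp only [hobbyRicePairing, Pi.neg_apply, neg_sq, Real.sign_neg, neg_mul, sum_neg_distrib]

/-- The map `F : Sⁿ → V*`, `⟨F(x), g⟩ = ∫₀¹ h_x(t) g(t) dt` (with `h_x` the step function
with value `sign xᵢ` on the interval of length `xᵢ²`), is continuous on the sphere and
odd: for every integrable `g`, `x ↦ ⟨F(x), g⟩` is continuous on `{Σ xᵢ² = 1}`, and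
`⟨F(-x), g⟩ = -⟨F(x), g⟩`. -/
theorem hobbyRicePairing_continuous_odd (n : ℕ) :
    (∀ g : ℝ → ℝ, IntegrableOn g (Set.Icc (0 : ℝ) 1) →
      ContinuousOn (fun x => hobbyRicePairing n x g)
        {x : Fin (n + 1) → ℝ | ∑ i, x i ^ 2 = 1}) ∧
    (∀ x : Fin (n + 1) → ℝ, (∑ i, x i ^ 2) = 1 → ∀ g : ℝ → ℝ,
      hobbyRicePairing n (-x) g = -hobbyRicePairing n x g) :=
  ⟨fun _ hg => continuousOn_hobbyRicePairing n hg, fun x _ g => hobbyRicePairing_neg n x g⟩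
end

section
/- Let f be a continuous function on S¹ = ℝ/2πℤ attaining both positive and negative values. Then there exists an orientation-preserving diffeomorphism φ of S¹ such that ∫₀^{2π} f(φ(x)) dx = 0. -/
open Real MeasureTheory intervalIntegral Filter Topology

/-- If `f` is a continuous function on the circle `S¹ = ℝ/2πℤ` attaining both positive
and negative values, then there is an orientation-preserving diffeomorphism `φ` of `S¹`
(a smooth map `ℝ → ℝ` with positive derivative commuting with `x ↦ x + 2π`) such that
`∫₀^{2π} f(φ(x)) dx = 0`. -/
theorem converse_zero_average (f : ℝ → ℝ) (hf : Continuous f)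
    (hper : Function.Periodic f (2 * π))
    (hpos : ∃ x, 0 < f x) (hneg : ∃ x, f x < 0) :
    ∃ φ : ℝ → ℝ, ContDiff ℝ (⊤ : ℕ∞) φ ∧ (∀ x, 0 < deriv φ x) ∧
      (∀ x, φ (x + 2 * π) = φ x + 2 * π) ∧
      ∫ x in (0 : ℝ)..(2 * π), f (φ x) = 0 := by
  obtain ⟨xp, hxp⟩ := hpos
  obtain ⟨xn, hxn⟩ := hneg
  have hπ := Real.pi_pos
  have h2π : (0:ℝ) < 2 * π := by positivity
  -- global bound on |f|
  obtain ⟨M, hM⟩ : ∃ M, ∀ y, |f y| ≤ M := by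
    obtain ⟨yM, _, hyM⟩ := isCompact_Icc.exists_isMaxOn
      (Set.nonempty_Icc.mpr (by linarith) : (Set.Icc (0:ℝ) (2*π)).Nonempty)
      (hf.abs.continuousOn)
    refine ⟨|f yM|, fun y => ?_⟩
    have hy0 : f y = f (toIocMod h2π 0 y) := by
      have hsub : y - toIocMod h2π 0 y = toIocDiv h2π 0 y • (2*π) := self_sub_toIocMod h2π 0 y
      have h1 : toIocMod h2π 0 y = y - toIocDiv h2π 0 y • (2*π) := by linarith
      rw [h1]; exact (hper.sub_zsmul_eq _).symm
    rw [hy0]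
    have hmem := toIocMod_mem_Ioc h2π 0 y
    exact hyM ⟨le_of_lt hmem.1, by linarith [hmem.2]⟩
  -- the Möbius angle maps
  set m : ℝ → ℝ → ℝ := fun r x => x - 2 * arctan (r * sin x / (1 + r * cos x)) with hm_def
  have hden : ∀ r ∈ Set.Ioo (0:ℝ) 1, ∀ x, 0 < 1 + r * cos x := by
    intro r hr x
    nlinarith [Real.neg_one_le_cos x, Real.cos_le_one x, hr.1, hr.2]
  have hmcont : ∀ r ∈ Set.Ioo (0:ℝ) 1, Continuous (m r) := by
    intro r hr
    apply continuous_id.sub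
    apply continuous_const.mul
    apply Real.continuous_arctan.comp
    exact (continuous_const.mul Real.continuous_sin).div
      (continuous_const.add (continuous_const.mul Real.continuous_cos))
      (fun x => ne_of_gt (hden r hr x))
  -- half-angle identity
  have htanhalf : ∀ x : ℝ, cos (x/2) ≠ 0 → 1 + cos x ≠ 0 →
      sin x / (1 + cos x) = tan (x/2) := by
    intro x hc hne
    have hsin : sin x = 2 * sin (x/2) * cos (x/2) := by
      conv_lhs => rw [show x = 2*(x/2) by ring, Real.sin_two_mul]
    have hcos : 1 + cos x = 2 * cos (x/2)^2 := by
      conv_lhs => rw [show x = 2*(x/2) by ring, Real.cos_two_mul]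
      ring
    rw [hsin, hcos, Real.tan_eq_sin_div_cos]
    field_simp
  -- the concentration limit
  have hlim : ∀ a : ℝ, Tendsto (fun r => ∫ x in (0:ℝ)..(2*π), f (a + m r x)) (𝓝[<] (1:ℝ))
      (𝓝 ((2*π) * f a)) := by
    intro a
    have hconst : (2*π) * f a = ∫ x in (0:ℝ)..(2*π), (fun _ : ℝ => f a) x := by
      simp [smul_eq_mul]
    rw [hconst]
    apply intervalIntegral.tendsto_integral_filter_of_dominated_convergence (bound := fun _ => M)
    · filter_upwards [Ioo_mem_nhdsLT (by norm_num : (0:ℝ) < 1)] with r hr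
      exact ((hf.comp (continuous_const.add (hmcont r hr))).aestronglyMeasurable)
    · filter_upwards with r
      filter_upwards with x
      intro _
      rw [Real.norm_eq_abs]
      exact hM _
    · exact intervalIntegrable_const
    · have hae : ∀ᵐ x : ℝ, x ≠ π := by
        have : ({π} : Set ℝ) =ᵐ[volume] (∅ : Set ℝ) := by
          simp [ae_eq_empty]
        simpa [ae_iff] using (by simp : volume ({π} : Set ℝ) = 0)
      filter_upwards [hae] with x hxπ hxmem
      rw [Set.uIoc_of_le (by linarith : (0:ℝ) ≤ 2*π)] at hxmem
      have hcosx : 1 + cos x ≠ 0 := by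
        intro h
        have hcx : cos x = -1 := by linarith
        rcases eq_or_lt_of_le hxmem.2 with h2 | h2
        · rw [h2] at hcx; rw [Real.cos_two_pi] at hcx; norm_num at hcx
        · have h3 : cos (x - π) = 1 := by rw [Real.cos_sub_pi, hcx]; norm_num
          have h4 : x - π = 0 :=
            (Real.cos_eq_one_iff_of_lt_of_lt (by linarith [hxmem.1]) (by linarith)).mp h3
          exact hxπ (by linarith)
      have hm_tendsto : Tendsto (fun r => m r x) (𝓝[<] (1:ℝ))
          (𝓝 (x - 2 * arctan (sin x / (1 + cos x)))) := by
        apply Tendsto.mono_left _ nhdsWithin_le_nhds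
        have hca : ContinuousAt (fun r : ℝ => x - 2 * arctan (r * sin x / (1 + r * cos x))) 1 := by
          apply ContinuousAt.sub continuousAt_const
          apply ContinuousAt.mul continuousAt_const
          apply Real.continuous_arctan.continuousAt.comp
          apply ContinuousAt.div
          · exact (continuousAt_id.mul continuousAt_const)
          · exact continuousAt_const.add (continuousAt_id.mul continuousAt_const)
          · simpa using hcosx
        simpa using hca.tendsto
      have hL : f (a + (x - 2 * arctan (sin x / (1 + cos x)))) = f a := by
        rcases lt_trichotomy x π with hx | hx | hx
        · have hchalf : cos (x/2) ≠ 0 := by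
            have := Real.cos_pos_of_mem_Ioo
              (show x/2 ∈ Set.Ioo (-(π/2)) (π/2) by constructor <;> [linarith [hxmem.1]; linarith])
            exact ne_of_gt this
          rw [htanhalf x hchalf hcosx, Real.arctan_tan (by linarith [hxmem.1]) (by linarith)]
          rw [show a + (x - 2*(x/2)) = a by ring]
        · exact absurd hx hxπ
        · have hchalf : cos (x/2) ≠ 0 := by
            have := Real.cos_neg_of_pi_div_two_lt_of_lt
              (show π/2 < x/2 by linarith) (show x/2 < π + π/2 by linarith [hxmem.2])
            exact ne_of_lt this
          have harct : arctan (tan (x/2)) = x/2 - π := by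
            rw [show tan (x/2) = tan (x/2 - π) from (Real.tan_periodic.sub_eq (x/2)).symm]
            exact Real.arctan_tan (by linarith) (by linarith [hxmem.2])
          rw [htanhalf x hchalf hcosx, harct,
            show a + (x - 2*(x/2 - π)) = a + 2*π by ring]
          exact hper a
      have hcomp : Tendsto (fun r => f (a + m r x)) (𝓝[<] (1:ℝ))
          (𝓝 (f (a + (x - 2 * arctan (sin x / (1 + cos x)))))) :=
        ((hf.continuousAt (x := a + (x - 2 * arctan (sin x / (1 + cos x))))).tendsto).comp
          (tendsto_const_nhds.add hm_tendsto)
      rw [hL] at hcomp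
      exact hcomp
  -- pick r making both integrals have the right signs
  obtain ⟨r, hrIoo, hp1, hn1⟩ : ∃ r, r ∈ Set.Ioo (0:ℝ) 1 ∧
      (0 < ∫ x in (0:ℝ)..(2*π), f (xp + m r x)) ∧
      (∫ x in (0:ℝ)..(2*π), f (xn + m r x)) < 0 := by
    have h1 : (0:ℝ) < (2*π) * f xp := by positivity
    have h2 : (2*π) * f xn < 0 := mul_neg_of_pos_of_neg h2π hxn
    have e1 := (hlim xp).eventually (eventually_gt_nhds h1)
    have e2 := (hlim xn).eventually (eventually_lt_nhds h2)
    have e3 : ∀ᶠ r in 𝓝[<] (1:ℝ), r ∈ Set.Ioo (0:ℝ) 1 :=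
      Filter.eventually_mem_set.mpr (Ioo_mem_nhdsLT (by norm_num))
    obtain ⟨r, hr3, hr1, hr2⟩ := (e3.and (e1.and e2)).exists
    exact ⟨r, hr3, hr1, hr2⟩
  -- intermediate value in the translation parameter
  have hGcont : Continuous (fun a => ∫ x in (0:ℝ)..(2*π), f (a + m r x)) := by
    apply intervalIntegral.continuous_parametric_intervalIntegral_of_continuous'
    exact hf.comp (continuous_fst.add ((hmcont r hrIoo).comp continuous_snd))
  obtain ⟨a₀, _, hGa₀⟩ : ∃ a₀ ∈ Set.uIcc xp xn,
      (∫ x in (0:ℝ)..(2*π), f (a₀ + m r x)) = 0 := by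
    have hsub := intermediate_value_uIcc (hGcont.continuousOn (s := Set.uIcc xp xn))
    have h0mem : (0:ℝ) ∈ Set.uIcc (∫ x in (0:ℝ)..(2*π), f (xp + m r x))
        (∫ x in (0:ℝ)..(2*π), f (xn + m r x)) :=
      Set.mem_uIcc.mpr (Or.inr ⟨le_of_lt hn1, le_of_lt hp1⟩)
    obtain ⟨a₀, ha₀, h⟩ := hsub h0mem
    exact ⟨a₀, ha₀, h⟩
  refine ⟨fun x => a₀ + m r x, ?_, ?_, ?_, hGa₀⟩
  · -- analyticity
    have hq : ContDiff ℝ (⊤ : ℕ∞) (fun x : ℝ => r * sin x / (1 + r * cos x)) := by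
      apply ContDiff.div (contDiff_const.mul Real.contDiff_sin)
        (contDiff_const.add (contDiff_const.mul Real.contDiff_cos))
        (fun x => ne_of_gt (hden r hrIoo x))
    exact contDiff_const.add (contDiff_id.sub (contDiff_const.mul
      (Real.contDiff_arctan.comp hq)))
  · -- positive derivative
    intro x
    have hDpos := hden r hrIoo x
    have hDne : (1 + r * cos x) ≠ 0 := ne_of_gt hDpos
    have hu : HasDerivAt (fun y => r * sin y / (1 + r * cos y))
        (((r * cos x) * (1 + r * cos x) - (r * sin x) * (r * -sin x)) / (1 + r * cos x)^2) x := by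
      exact HasDerivAt.div ((Real.hasDerivAt_sin x).const_mul r)
        (((Real.hasDerivAt_cos x).const_mul r).const_add 1) hDne
    have harc : HasDerivAt (fun y => arctan (r * sin y / (1 + r * cos y)))
        (1 / (1 + (r * sin x / (1 + r * cos x))^2) *
          (((r * cos x) * (1 + r * cos x) - (r * sin x) * (r * -sin x)) / (1 + r * cos x)^2)) x :=
      (Real.hasDerivAt_arctan _).comp x hu
    have htot : HasDerivAt (fun y => a₀ + m r y)
        (1 - 2 * (1 / (1 + (r * sin x / (1 + r * cos x))^2) *
          (((r * cos x) * (1 + r * cos x) - (r * sin x) * (r * -sin x)) / (1 + r * cos x)^2))) x := by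
      exact ((hasDerivAt_id x).sub (harc.const_mul 2)).const_add a₀
    rw [htot.deriv]
    have hs := Real.sin_sq_add_cos_sq x
    have hA : 0 < (1 + r * cos x)^2 + (r * sin x)^2 := by positivity
    have hgoal : 1 / (1 + (r * sin x / (1 + r * cos x))^2) *
          (((r * cos x) * (1 + r * cos x) - (r * sin x) * (r * -sin x)) / (1 + r * cos x)^2)
        = ((r * cos x) * (1 + r * cos x) + (r * sin x)^2) /
            ((1 + r * cos x)^2 + (r * sin x)^2) := by
      rw [eq_div_iff (ne_of_gt hA)]
      field_simp
      ring
    rw [hgoal, sub_pos]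
    rw [show (2:ℝ) * (((r * cos x) * (1 + r * cos x) + (r * sin x)^2) /
        ((1 + r * cos x)^2 + (r * sin x)^2)) = (2*((r * cos x) * (1 + r * cos x) + (r * sin x)^2)) /
        ((1 + r * cos x)^2 + (r * sin x)^2) by ring]
    rw [div_lt_one hA]
    have hr2 : r^2 < 1 := by nlinarith [hrIoo.1, hrIoo.2]
    nlinarith [hs, hr2]
  · -- commutes with translation
    intro x
    simp only [hm_def, Real.sin_add_two_pi, Real.cos_add_two_pi]
    ring
end

section
/- Let h be a ±1-valued step function on S¹ with intervals of constant sign [x₀,x₁],…,[xₙ,x_{n+1}] (x₀ = 0, x_{n+1} = 2π), and for small α = (α₁,…,αₙ) let F(α) ∈ V* be defined by F(α)(g) = Σ_{k=0}^{n} (−1)^k ∫_{x_k+α_k}^{x_{k+1}+α_{k+1}} g(x) dx (with α₀ = α_{n+1} = 0), where V is an n-dimensional Chebyshev system with basis g₁,…,gₙ. Then the differential of F at α = 0 has matrix entries ∂F(α)(gᵢ)/∂αⱼ|₀ = 2(−1)^{j+1} gᵢ(xⱼ), and this matrix is invertible. -/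
/-!
Writing `Φᵢ(t) = ∫₀ᵗ gᵢ`, the alternating sum of integrals is an alternating sum of differences
`Φᵢ(x_{k+1}+α_{k+1}) - Φᵢ(x_k+α_k)`, and summation by parts turns it into
`2 ∑ⱼ (-1)^j Φᵢ(x_{j+1} + α_j)` plus terms independent of `α`: each interior endpoint is shared by
two neighbouring intervals of opposite sign. Hence `F` is a sum of functions of one variable each,
and the fundamental theorem of calculus gives the Jacobian. Its determinant is
`∏ⱼ 2(-1)^j · det (gᵢ(xⱼ))`, and a vanishing determinant would produce a nonzero
`∑ cᵢ gᵢ ∈ V` vanishing at the `n` distinct points `x₁, …, xₙ` of `[0, 2π)`, which the Chebyshev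
property forbids.
-/

open Real MeasureTheory

/-- Extend the perturbation vector `α = (α₁,…,αₙ)` of the interior partition points by
`α₀ = α_{n+1} = 0`. -/
noncomputable def padPerturbation {n : ℕ} (α : Fin n → ℝ) : Fin (n + 2) → ℝ :=
  Fin.cons 0 (Fin.snoc α 0)

/-- The map `F(α)(gᵢ) = ∑ₖ (-1)^k ∫_{x_k+α_k}^{x_{k+1}+α_{k+1}} gᵢ(x) dx`, given by
pairing the perturbed step function with a basis `g` of `V`. -/
noncomputable def perturbedPairing {n : ℕ} (x : Fin (n + 2) → ℝ)
    (g : Fin n → ℝ → ℝ) (α : Fin n → ℝ) : Fin n → ℝ :=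
  fun i => ∑ k : Fin (n + 1), (-1 : ℝ) ^ (k : ℕ) *
    ∫ s in (x k.castSucc + padPerturbation α k.castSucc)..(x k.succ + padPerturbation α k.succ),
      g i s

theorem Fin.sum_neg_one_pow_mul_sub {R : Type*} [CommRing R] (n : ℕ) (f : Fin (n + 2) → R) :
    ∑ k : Fin (n + 1), (-1 : R) ^ (k : ℕ) * (f k.succ - f k.castSucc) =
      2 * ∑ j : Fin n, (-1 : R) ^ (j : ℕ) * f j.succ.castSucc - f 0 +
        (-1 : R) ^ n * f (Fin.last (n + 1)) := by
  induction n with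
  | zero => simp [sub_eq_neg_add]
  | succ n ih =>
    conv_rhs => rw [Fin.sum_univ_castSucc]
    rw [Fin.sum_univ_castSucc]
    have := ih (fun m => f m.castSucc)
    simp only [Fin.succ_castSucc, Fin.val_castSucc, Fin.castSucc_zero, Fin.succ_last,
      Fin.val_last] at this ⊢
    rw [this]
    ring

section padPerturbation

variable {n : ℕ} (α : Fin n → ℝ)

@[simp] theorem padPerturbation_zero : padPerturbation α 0 = 0 := rfl

@[simp] theorem padPerturbation_last : padPerturbation α (Fin.last (n + 1)) = 0 := by
  rw [← Fin.succ_last, padPerturbation, Fin.cons_succ, Fin.snoc_last]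

@[simp] theorem padPerturbation_succ_castSucc (j : Fin n) :
    padPerturbation α j.succ.castSucc = α j := by
  rw [← Fin.succ_castSucc, padPerturbation, Fin.cons_succ, Fin.snoc_castSucc]

end padPerturbation

theorem perturbedPairing_apply_eq {n : ℕ} (x : Fin (n + 2) → ℝ) {g : Fin n → ℝ → ℝ}
    (hg : ∀ i, Continuous (g i)) (α : Fin n → ℝ) (i : Fin n) :
    perturbedPairing x g α i =
      2 * ∑ j : Fin n, (-1 : ℝ) ^ (j : ℕ) * (∫ s in (0 : ℝ)..(x j.succ.castSucc + α j), g i s)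
        - (∫ s in (0 : ℝ)..(x 0), g i s)
        + (-1 : ℝ) ^ n * ∫ s in (0 : ℝ)..(x (Fin.last (n + 1))), g i s := by
  have hsplit : ∀ a b : ℝ,
      ∫ s in a..b, g i s = (∫ s in (0 : ℝ)..b, g i s) - ∫ s in (0 : ℝ)..a, g i s :=
    fun a b => (intervalIntegral.integral_interval_sub_left
      ((hg i).intervalIntegrable 0 b) ((hg i).intervalIntegrable 0 a)).symm
  simp only [perturbedPairing, hsplit (x _ + _)]
  rw [Fin.sum_neg_one_pow_mul_sub n (fun m => ∫ s in (0 : ℝ)..(x m + padPerturbation α m), g i s)]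
  simp only [padPerturbation_zero, padPerturbation_last, padPerturbation_succ_castSucc, add_zero]

theorem hasFDerivAt_perturbedPairing {n : ℕ} (x : Fin (n + 2) → ℝ) {g : Fin n → ℝ → ℝ}
    (hg : ∀ i, Continuous (g i)) :
    HasFDerivAt (perturbedPairing x g)
      (LinearMap.toContinuousLinearMap (Matrix.toLin'
        (Matrix.of fun i j : Fin n => 2 * (-1 : ℝ) ^ (j : ℕ) * g i (x j.succ.castSucc))))
      0 := by
  refine hasFDerivAt_pi'' fun i => ?_
  have hterm : ∀ j : Fin n, HasFDerivAt
      (fun α : Fin n → ℝ => ∫ s in (0 : ℝ)..(x j.succ.castSucc + α j), g i s)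
      (g i (x j.succ.castSucc) • ContinuousLinearMap.proj (R := ℝ) (φ := fun _ : Fin n => ℝ) j)
      0 := by
    intro j
    have hΦ := (hg i).integral_hasStrictDerivAt 0 (x j.succ.castSucc + (0 : Fin n → ℝ) j)
    simpa [Function.comp_def] using hΦ.hasDerivAt.comp_hasFDerivAt 0
      ((hasFDerivAt_apply (𝕜 := ℝ) j (0 : Fin n → ℝ)).const_add _)
  have hsum := (((HasFDerivAt.fun_sum (u := Finset.univ) fun j _ =>
    (hterm j).const_mul ((-1 : ℝ) ^ (j : ℕ))).const_mul 2).sub_const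
      (∫ s in (0 : ℝ)..(x 0), g i s)).add_const
      ((-1 : ℝ) ^ n * ∫ s in (0 : ℝ)..(x (Fin.last (n + 1))), g i s)
  rw [funext (perturbedPairing_apply_eq x hg · i)]
  convert hsum using 1
  ext v
  simp [Matrix.toLin'_apply, Matrix.mulVec, dotProduct, Finset.mul_sum, mul_assoc]

theorem det_of_apply_ne_zero_of_ncard_zeros_le {K X : Type*} [Field K] {n : ℕ}
    {V : Submodule K (X → K)} {S : Set X}
    (hCheb : ∀ f ∈ V, f ≠ 0 → {y ∈ S | f y = 0}.Finite ∧ {y ∈ S | f y = 0}.ncard ≤ n - 1)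
    {g : Fin n → X → K} (hgV : ∀ i, g i ∈ V) (hgind : LinearIndependent K g)
    {y : Fin n → X} (hy : Function.Injective y) (hyS : ∀ j, y j ∈ S) :
    (Matrix.of fun i j => g i (y j)).det ≠ 0 := by
  intro hdet
  obtain ⟨c, hc0, hc⟩ := Matrix.exists_vecMul_eq_zero_iff.2 hdet
  set f := ∑ i, c i • g i
  have hfV : f ∈ V := V.sum_mem fun i _ => V.smul_mem _ (hgV i)
  have hf0 : f ≠ 0 := fun h => hc0 (funext (Fintype.linearIndependent_iff.1 hgind c h))
  have hfy : ∀ j, f (y j) = 0 := fun j => by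
    simpa [Matrix.vecMul, dotProduct, f, Finset.sum_apply] using congrFun hc j
  obtain ⟨hfin, hcard⟩ := hCheb f hfV hf0
  have hn : n ≠ 0 := by rintro rfl; exact hc0 (Subsingleton.elim _ _)
  have hzeros : n ≤ {t ∈ S | f t = 0}.ncard :=
    calc n = (Set.range y).ncard := by rw [Set.ncard_range_of_injective hy, Nat.card_fin]
      _ ≤ _ := Set.ncard_le_ncard (by rintro _ ⟨j, rfl⟩; exact ⟨hyS j, hfy j⟩) hfin
  omega

theorem StrictMono.apply_succ_castSucc_mem_Ico {α : Type*} [Preorder α] {n : ℕ}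
    {x : Fin (n + 2) → α} (hx : StrictMono x) (j : Fin n) :
    x j.succ.castSucc ∈ Set.Ico (x 0) (x (Fin.last (n + 1))) :=
  ⟨hx.monotone (Fin.zero_le _), hx (Fin.castSucc_lt_last _)⟩

theorem perturbedPairing_deriv_general (n : ℕ) (V : Submodule ℝ (ℝ → ℝ))
    (hVcont : ∀ g ∈ V, Continuous g ∧ Function.Periodic g (2 * π))
    (hCheb : ∀ g ∈ V, g ≠ 0 →
      {y ∈ Set.Ico (0 : ℝ) (2 * π) | g y = 0}.Finite ∧
      {y ∈ Set.Ico (0 : ℝ) (2 * π) | g y = 0}.ncard ≤ n - 1)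
    (g : Fin n → ℝ → ℝ) (hgV : ∀ i, g i ∈ V)
    (hgind : LinearIndependent ℝ g)
    (x : Fin (n + 2) → ℝ) (hx : StrictMono x)
    (hx0 : x 0 = 0) (hxl : x (Fin.last (n + 1)) = 2 * π) :
    HasFDerivAt (perturbedPairing x g)
      (LinearMap.toContinuousLinearMap (Matrix.toLin'
        (Matrix.of fun i j : Fin n => 2 * (-1 : ℝ) ^ (j : ℕ) * g i (x j.succ.castSucc))))
      0 ∧
    (Matrix.of fun i j : Fin n => 2 * (-1 : ℝ) ^ (j : ℕ) * g i (x j.succ.castSucc)).det ≠ 0 := by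
  refine ⟨hasFDerivAt_perturbedPairing x fun i => (hVcont _ (hgV i)).1, ?_⟩
  have hinj : Function.Injective fun j : Fin n => x j.succ.castSucc :=
    hx.injective.comp ((Fin.castSucc_injective _).comp (Fin.succ_injective _))
  have hmem : ∀ j : Fin n, x j.succ.castSucc ∈ Set.Ico 0 (2 * π) := by
    simpa only [hx0, hxl] using hx.apply_succ_castSucc_mem_Ico
  have hsign : ∏ j : Fin n, (2 * (-1 : ℝ) ^ (j : ℕ)) ≠ 0 :=
    Finset.prod_ne_zero_iff.2 fun j _ => by simp
  have hfactor := Matrix.det_mul_row (fun j : Fin n => 2 * (-1 : ℝ) ^ (j : ℕ))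
    (Matrix.of fun i j => g i (x j.succ.castSucc))
  simp only [Matrix.of_apply] at hfactor
  rw [hfactor]
  exact mul_ne_zero hsign (det_of_apply_ne_zero_of_ncard_zeros_le hCheb hgV hgind hinj hmem)

/-- Let `h` be a `±1` step function on the circle with intervals of constant sign
`[x₀,x₁],…,[xₙ,x_{n+1}]` (`x₀ = 0`, `x_{n+1} = 2π`, interior points `x₁ < ⋯ < xₙ`), let
`V` be an `n`-dimensional Chebyshev system with basis `g₁,…,gₙ`, and let
`F(α)(gᵢ) = ∑ₖ (-1)^k ∫_{x_k+α_k}^{x_{k+1}+α_{k+1}} gᵢ` (with `α₀ = α_{n+1} = 0`). Then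
the differential of `F` at `α = 0` is given by the matrix `(2·(-1)^{j+1} gᵢ(xⱼ))`
(indexing interior points by `j = 1,…,n`), and this matrix is invertible. -/
theorem perturbedPairing_deriv (n : ℕ) (V : Submodule ℝ (ℝ → ℝ))
    (hVfd : FiniteDimensional ℝ V) (hVdim : Module.finrank ℝ V = n)
    (hVcont : ∀ g ∈ V, Continuous g ∧ Function.Periodic g (2 * π))
    (hCheb : ∀ g ∈ V, g ≠ 0 →
      {y ∈ Set.Ico (0 : ℝ) (2 * π) | g y = 0}.Finite ∧
      {y ∈ Set.Ico (0 : ℝ) (2 * π) | g y = 0}.ncard ≤ n - 1)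
    (g : Fin n → ℝ → ℝ) (hgV : ∀ i, g i ∈ V)
    (hgind : LinearIndependent ℝ g)
    (hgspan : Submodule.span ℝ (Set.range g) = V)
    (x : Fin (n + 2) → ℝ) (hx : StrictMono x)
    (hx0 : x 0 = 0) (hxl : x (Fin.last (n + 1)) = 2 * π) :
    HasFDerivAt (perturbedPairing x g)
      (LinearMap.toContinuousLinearMap (Matrix.toLin'
        (Matrix.of fun i j : Fin n => 2 * (-1 : ℝ) ^ (j : ℕ) * g i (x j.succ.castSucc))))
      0 ∧
    (Matrix.of fun i j : Fin n => 2 * (-1 : ℝ) ^ (j : ℕ) * g i (x j.succ.castSucc)).det ≠ 0 :=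
  perturbedPairing_deriv_general n V hVcont hCheb g hgV hgind x hx hx0 hxl
end

section
/- Let f : ℝ → ℝ be a diffeomorphism (a coordinate representation of a diffeomorphism of ℝP¹) with f' > 0. Define F : ℝ² ∖ {0} → ℝ² ∖ {0} in polar coordinates by F(x, r) = (f(x), r·f'(x)^{−1/2}). Then F is area-preserving and homogeneous of degree one, and F ∈ SL(2,ℝ) (i.e., F is linear) if and only if f is a projective (Möbius) transformation. -/
open Real MeasureTheory


open Set in

theorem my_lintegral_comp_polarCoord_symm (g : ℝ × ℝ → ENNReal) :
    (∫⁻ p in polarCoord.target, ENNReal.ofReal p.1 * g (polarCoord.symm p)) = ∫⁻ p, g p := by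
  set B : ℝ × ℝ → ℝ × ℝ →L[ℝ] ℝ × ℝ := fun p =>
    LinearMap.toContinuousLinearMap (Matrix.toLin (Module.Basis.finTwoProd ℝ) (Module.Basis.finTwoProd ℝ)
      !![cos p.2, -p.1 * sin p.2; sin p.2, p.1 * cos p.2])
  have A : ∀ p ∈ polarCoord.target, HasFDerivWithinAt polarCoord.symm (B p) polarCoord.target p :=
    fun p _ => (hasFDerivAt_polarCoord_symm p).hasFDerivWithinAt
  have B_det : ∀ p, (B p).det = p.1 := by
    intro p
    conv_rhs => rw [← one_mul p.1, ← cos_sq_add_sin_sq p.2]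
    simp only [B, neg_mul, LinearMap.det_toContinuousLinearMap, LinearMap.det_toLin,
      Matrix.det_fin_two_of, sub_neg_eq_add]
    ring
  symm
  calc
    ∫⁻ p, g p = ∫⁻ p in polarCoord.source, g p := by
      rw [← setLIntegral_univ, Measure.restrict_congr_set polarCoord_source_ae_eq_univ]
    _ = ∫⁻ p in polarCoord.symm '' polarCoord.target, g p := by
      rw [OpenPartialHomeomorph.symm_image_target_eq_source]
    _ = ∫⁻ p in polarCoord.target, ENNReal.ofReal |(B p).det| * g (polarCoord.symm p) := by
      exact lintegral_image_eq_lintegral_abs_det_fderiv_mul volume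
        polarCoord.open_target.measurableSet A polarCoord.symm.injOn g
    _ = ∫⁻ p in polarCoord.target, ENNReal.ofReal p.1 * g (polarCoord.symm p) := by
      refine setLIntegral_congr_fun polarCoord.open_target.measurableSet
        (fun x hx => ?_)
      rw [B_det, abs_of_pos hx.1]

open Set in
theorem periodic_setLIntegral {T : ℝ} (hT : 0 < T) {H : ℝ → ENNReal}
    (hH : Function.Periodic H T) (a b : ℝ) :
    (∫⁻ u in Ioc a (a + T), H u) = ∫⁻ u in Ioc b (b + T), H u := by
  haveI : VAddInvariantMeasure (AddSubgroup.zmultiples T) ℝ volume :=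
    ⟨fun c s _ => measure_preimage_add _ _ _⟩
  apply MeasureTheory.IsAddFundamentalDomain.setLIntegral_eq (G := AddSubgroup.zmultiples T)
  exacts [isAddFundamentalDomain_Ioc hT a, isAddFundamentalDomain_Ioc hT b,
    hH.map_vadd_zmultiples]

open Set in
theorem polar_rep (v : ℝ × ℝ) :
    v = (‖(v.1 + v.2 * Complex.I : ℂ)‖ * cos (Complex.arg (v.1 + v.2 * Complex.I)),
         ‖(v.1 + v.2 * Complex.I : ℂ)‖ * sin (Complex.arg (v.1 + v.2 * Complex.I))) := by
  set z : ℂ := v.1 + v.2 * Complex.I with hz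
  have h1 : ‖z‖ * cos z.arg = z.re := Complex.norm_mul_cos_arg z
  have h2 : ‖z‖ * sin z.arg = z.im := Complex.norm_mul_sin_arg z
  have hre : z.re = v.1 := by simp [hz]
  have him : z.im = v.2 := by simp [hz]
  exact Prod.ext (by rw [h1, hre]) (by rw [h2, him])

open Set in
set_option maxHeartbeats 1000000 in
theorem key_cov (f : ℝ → ℝ) (hf : ContDiff ℝ (⊤ : ℕ∞) f) (hf' : ∀ x, 0 < deriv f x)
    (hproj : ∀ x, f (x + π) = f x + π) (g : ℝ × ℝ → ENNReal) (hg : Measurable g) :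
    (∫⁻ p in polarCoord.target, ENNReal.ofReal p.1 *
      g (p.1 / Real.sqrt (deriv f p.2) * cos (f p.2),
         p.1 / Real.sqrt (deriv f p.2) * sin (f p.2))) = ∫⁻ p, g p := by
  have hf2 : ContDiff ℝ (⊤:ℕ∞) f := hf.of_le (by simp)
  obtain ⟨hfdiff, hfd⟩ := contDiff_infty_iff_deriv.1 hf2
  set D := deriv f with hD
  have hDd : Differentiable ℝ D := hfd.differentiable (by simp)
  set c : ℝ → ℝ := fun θ => (Real.sqrt (D θ))⁻¹ with hcdef
  have hsq : ∀ θ, Real.sqrt (D θ) ≠ 0 := fun θ => (Real.sqrt_pos.2 (hf' θ)).ne'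
  have hcpos : ∀ θ, 0 < c θ := fun θ => inv_pos.2 (Real.sqrt_pos.2 (hf' θ))
  have hcdiff : ∀ θ, DifferentiableAt ℝ c θ :=
    fun θ => (((hDd θ).sqrt (hf' θ).ne').inv (hsq θ))
  set c' : ℝ → ℝ := deriv c with hc'def
  have hc : ∀ θ, HasDerivAt c (c' θ) θ := fun θ => (hcdiff θ).hasDerivAt
  have hd : ∀ θ, HasDerivAt f (D θ) θ := fun θ => (hfdiff θ).hasDerivAt
  set Φ : ℝ × ℝ → ℝ × ℝ := fun p => (p.1 * c p.2, f p.2) with hΦdef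
  set B : ℝ × ℝ → ℝ × ℝ →L[ℝ] ℝ × ℝ := fun p =>
    LinearMap.toContinuousLinearMap (Matrix.toLin (Module.Basis.finTwoProd ℝ) (Module.Basis.finTwoProd ℝ)
      !![c p.2, p.1 * c' p.2; 0, D p.2]) with hBdef
  have hB : ∀ p : ℝ × ℝ, HasFDerivAt Φ (B p) p := by
    intro p
    show HasFDerivAt Φ
      (LinearMap.toContinuousLinearMap (Matrix.toLin (Module.Basis.finTwoProd ℝ) (Module.Basis.finTwoProd ℝ)
        !![c p.2, p.1 * c' p.2; 0, D p.2])) p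
    rw [Matrix.toLin_finTwoProd_toContinuousLinearMap]
    convert HasFDerivAt.prodMk (𝕜 := ℝ)
      (hasFDerivAt_fst.mul ((hc p.2).comp_hasFDerivAt p hasFDerivAt_snd))
      ((hd p.2).comp_hasFDerivAt p hasFDerivAt_snd) using 2 <;>
    first | rfl | simp [smul_smul, add_comm, zero_smul]
  have B_det : ∀ p, (B p).det = c p.2 * D p.2 := by
    intro p
    show (LinearMap.toContinuousLinearMap (Matrix.toLin (Module.Basis.finTwoProd ℝ) (Module.Basis.finTwoProd ℝ)
        !![c p.2, p.1 * c' p.2; 0, D p.2])).det = _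
    simp only [LinearMap.det_toContinuousLinearMap, LinearMap.det_toLin,
      Matrix.det_fin_two_of]
    ring
  have hmono : StrictMono f := strictMono_of_deriv_pos hf'
  have hinj : InjOn Φ polarCoord.target := by
    rintro ⟨r₁, θ₁⟩ ⟨hr₁, -⟩ ⟨r₂, θ₂⟩ ⟨hr₂, -⟩ h
    have h2 : f θ₁ = f θ₂ := congrArg Prod.snd h
    have hθ : θ₁ = θ₂ := hmono.injective h2
    have h1 : r₁ * c θ₁ = r₂ * c θ₂ := congrArg Prod.fst h
    rw [hθ] at h1 ⊢
    exact Prod.ext (mul_right_cancel₀ (hcpos θ₂).ne' h1) rfl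
  have himg : Φ '' polarCoord.target = Ioi (0:ℝ) ×ˢ Ioo (f (-π)) (f π) := by
    ext ⟨s, u⟩
    constructor
    · rintro ⟨⟨r, θ⟩, ⟨hr, hθ⟩, h⟩
      rw [← h]
      exact ⟨mul_pos hr (hcpos θ), ⟨hmono hθ.1, hmono hθ.2⟩⟩
    · rintro ⟨hs, hu⟩
      have hple : (-π : ℝ) ≤ π := by linarith [Real.pi_pos]
      obtain ⟨θ, hθ, hθu⟩ := intermediate_value_Ioo hple hf.continuous.continuousOn hu
      refine ⟨(s * Real.sqrt (D θ), θ), ⟨mul_pos hs (Real.sqrt_pos.2 (hf' θ)), hθ⟩, ?_⟩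
      have h1 : s * Real.sqrt (D θ) * c θ = s := by
        rw [hcdef, mul_assoc, mul_inv_cancel₀ (hsq θ), mul_one]
      exact Prod.ext h1 hθu
  have hGm : Measurable fun q : ℝ × ℝ => ENNReal.ofReal q.1 * g (polarCoord.symm q) := by
    refine (ENNReal.measurable_ofReal.comp measurable_fst).mul (hg.comp ?_)
    exact ((continuous_fst.mul (Real.continuous_cos.comp continuous_snd)).prodMk
      (continuous_fst.mul (Real.continuous_sin.comp continuous_snd))).measurable
  have tonelli : ∀ a b : ℝ,
      (∫⁻ q in Ioi (0:ℝ) ×ˢ Ioo a b, ENNReal.ofReal q.1 * g (polarCoord.symm q)) =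
      ∫⁻ u in Ioo a b, ∫⁻ s in Ioi (0:ℝ), ENNReal.ofReal s * g (polarCoord.symm (s, u)) := by
    intro a b
    rw [Measure.volume_eq_prod, ← Measure.prod_restrict]
    exact lintegral_prod_symm _ hGm.aemeasurable
  have hfπ : f π = f (-π) + 2 * π := by
    have h2 := hproj (-π)
    have h3 := hproj 0
    rw [neg_add_cancel] at h2
    rw [zero_add] at h3
    rw [h3, h2]; ring
  set H : ℝ → ENNReal :=
    fun u => ∫⁻ s in Ioi (0:ℝ), ENNReal.ofReal s * g (polarCoord.symm (s, u)) with hHdef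
  have hper : Function.Periodic H (2 * π) := by
    intro u
    refine lintegral_congr fun s => ?_
    have hsymm : polarCoord.symm (s, u + 2 * π) = polarCoord.symm (s, u) := by
      show (s * cos (u + 2*π), s * sin (u + 2*π)) = (s * cos u, s * sin u)
      rw [Real.cos_add_two_pi, Real.sin_add_two_pi]
    rw [hsymm]
  have hdom : (∫⁻ u in Ioo (f (-π)) (f π), H u) = ∫⁻ u in Ioo (-π) π, H u := by
    rw [Measure.restrict_congr_set Ioo_ae_eq_Ioc, Measure.restrict_congr_set Ioo_ae_eq_Ioc]
    have h0 := periodic_setLIntegral Real.two_pi_pos hper (f (-π)) (-π)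
    have h1 : f (-π) + 2 * π = f π := hfπ.symm
    have h2 : -π + 2 * π = π := by ring
    rw [h1, h2] at h0
    exact h0
  calc
    (∫⁻ p in polarCoord.target, ENNReal.ofReal p.1 *
        g (p.1 / Real.sqrt (D p.2) * cos (f p.2), p.1 / Real.sqrt (D p.2) * sin (f p.2)))
      = ∫⁻ p in polarCoord.target,
          ENNReal.ofReal |(B p).det| * (ENNReal.ofReal (Φ p).1 * g (polarCoord.symm (Φ p))) := by
        refine setLIntegral_congr_fun polarCoord.open_target.measurableSet
          (fun p hp => ?_)
        have h1 : polarCoord.symm (Φ p) =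
            (p.1 / Real.sqrt (D p.2) * cos (f p.2), p.1 / Real.sqrt (D p.2) * sin (f p.2)) := by
          show (p.1 * c p.2 * cos (f p.2), p.1 * c p.2 * sin (f p.2)) = _
          rw [div_eq_mul_inv]
        rw [h1, B_det, ← mul_assoc]
        congr 1
        have hp1 : (0:ℝ) < p.1 := hp.1
        have hΦ1 : (Φ p).1 = p.1 * c p.2 := rfl
        rw [hΦ1, abs_of_pos (mul_pos (hcpos p.2) (hf' p.2)), ← ENNReal.ofReal_mul
          (mul_pos (hcpos p.2) (hf' p.2)).le]
        congr 1
        have hcc : c p.2 * c p.2 * D p.2 = 1 := by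
          rw [hcdef, ← mul_inv, Real.mul_self_sqrt (hf' p.2).le]
          exact inv_mul_cancel₀ (hf' p.2).ne'
        nlinarith [hcc]
    _ = ∫⁻ q in Φ '' polarCoord.target, ENNReal.ofReal q.1 * g (polarCoord.symm q) := by
        rw [lintegral_image_eq_lintegral_abs_det_fderiv_mul volume
          polarCoord.open_target.measurableSet (fun p _ => (hB p).hasFDerivWithinAt) hinj]
    _ = ∫⁻ q in Ioi (0:ℝ) ×ˢ Ioo (f (-π)) (f π),
          ENNReal.ofReal q.1 * g (polarCoord.symm q) := by rw [himg]
    _ = ∫⁻ u in Ioo (-π) π, H u := by rw [tonelli, hdom]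
    _ = ∫⁻ q in polarCoord.target, ENNReal.ofReal q.1 * g (polarCoord.symm q) := by
        rw [show polarCoord.target = Ioi (0:ℝ) ×ˢ Ioo (-π) π from rfl, tonelli]
    _ = ∫⁻ p, g p := my_lintegral_comp_polarCoord_symm g

open Set in

theorem mobius_back (f : ℝ → ℝ) (hf : ContDiff ℝ (⊤ : ℕ∞) f) (hf' : ∀ x, 0 < deriv f x)
    (a b c d : ℝ) (h1 : a * d - b * c = 1)
    (h2 : ∀ x : ℝ, sin (f x) * (a * cos x + b * sin x) =
      cos (f x) * (c * cos x + d * sin x)) :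
    ∃ ε : ℝ, ε ^ 2 = 1 ∧ ∀ x, ε * (a * cos x + b * sin x) = (Real.sqrt (deriv f x))⁻¹ * cos (f x)
      ∧ ε * (c * cos x + d * sin x) = (Real.sqrt (deriv f x))⁻¹ * sin (f x) := by
  have hfdiff : Differentiable ℝ f := (hf.of_le (by simp) : ContDiff ℝ (⊤:ℕ∞) f).differentiable
    (by simp)
  have hd : ∀ x, HasDerivAt f (deriv f x) x := fun x => (hfdiff x).hasDerivAt
  set u : ℝ → ℝ := fun x => a * cos x + b * sin x with hu
  set v : ℝ → ℝ := fun x => c * cos x + d * sin x with hv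
  set A : ℝ → ℝ := fun x => u x * cos (f x) + v x * sin (f x) with hA
  -- u = A cos f, v = A sin f
  have huA : ∀ x, u x = A x * cos (f x) := by
    intro x
    show a * cos x + b * sin x = ((a * cos x + b * sin x) * cos (f x)
      + (c * cos x + d * sin x) * sin (f x)) * cos (f x)
    have ht := sin_sq_add_cos_sq (f x)
    have h := h2 x
    linear_combination sin (f x) * h - (a * cos x + b * sin x) * ht
  have hvA : ∀ x, v x = A x * sin (f x) := by
    intro x
    show c * cos x + d * sin x = ((a * cos x + b * sin x) * cos (f x)
      + (c * cos x + d * sin x) * sin (f x)) * sin (f x)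
    have ht := sin_sq_add_cos_sq (f x)
    have h := h2 x
    linear_combination (-(cos (f x))) * h - (c * cos x + d * sin x) * ht
  -- derivatives
  have hu' : ∀ x, HasDerivAt u (a * (-sin x) + b * cos x) x := fun x =>
    ((hasDerivAt_cos x).const_mul a).add ((hasDerivAt_sin x).const_mul b)
  have hv' : ∀ x, HasDerivAt v (c * (-sin x) + d * cos x) x := fun x =>
    ((hasDerivAt_cos x).const_mul c).add ((hasDerivAt_sin x).const_mul d)
  have hcf : ∀ x, HasDerivAt (fun y => cos (f y)) (-sin (f x) * deriv f x) x := fun x =>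
    (hasDerivAt_cos (f x)).comp x (hd x)
  have hsf : ∀ x, HasDerivAt (fun y => sin (f y)) (cos (f x) * deriv f x) x := fun x =>
    (hasDerivAt_sin (f x)).comp x (hd x)
  have hA' : ∀ x, HasDerivAt A
      ((a * (-sin x) + b * cos x) * cos (f x) + u x * (-sin (f x) * deriv f x)
        + ((c * (-sin x) + d * cos x) * sin (f x) + v x * (cos (f x) * deriv f x))) x :=
    fun x => ((hu' x).mul (hcf x)).add ((hv' x).mul (hsf x))
  set A' : ℝ → ℝ := fun x => (a * (-sin x) + b * cos x) * cos (f x)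
      + u x * (-sin (f x) * deriv f x)
      + ((c * (-sin x) + d * cos x) * sin (f x) + v x * (cos (f x) * deriv f x)) with hA'def
  -- u as function equals A * cos f, so derivatives agree
  have hueq : u = fun x => A x * cos (f x) := funext huA
  have hveq : v = fun x => A x * sin (f x) := funext hvA
  have E1 : ∀ x, a * (-sin x) + b * cos x
      = A' x * cos (f x) + A x * (-sin (f x) * deriv f x) := by
    intro x
    have g1 : HasDerivAt (fun y => A y * cos (f y))
        (A' x * cos (f x) + A x * (-sin (f x) * deriv f x)) x := (hA' x).mul (hcf x)
    have g2 : HasDerivAt (fun y => A y * cos (f y)) (a * (-sin x) + b * cos x) x := by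
      rw [← hueq]; exact hu' x
    exact g2.unique g1
  have E2 : ∀ x, c * (-sin x) + d * cos x
      = A' x * sin (f x) + A x * (cos (f x) * deriv f x) := by
    intro x
    have g1 : HasDerivAt (fun y => A y * sin (f y))
        (A' x * sin (f x) + A x * (cos (f x) * deriv f x)) x := (hA' x).mul (hsf x)
    have g2 : HasDerivAt (fun y => A y * sin (f y)) (c * (-sin x) + d * cos x) x := by
      rw [← hveq]; exact hv' x
    exact g2.unique g1
  -- Wronskian
  have hW : ∀ x, u x * (c * (-sin x) + d * cos x) - (a * (-sin x) + b * cos x) * v x = 1 := by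
    intro x
    show (a * cos x + b * sin x) * (c * (-sin x) + d * cos x)
      - (a * (-sin x) + b * cos x) * (c * cos x + d * sin x) = 1
    have ht := sin_sq_add_cos_sq x
    linear_combination (a * d - b * c) * ht + h1
  -- key identity
  have hkey : ∀ x, deriv f x * A x ^ 2 = 1 := by
    intro x
    have w := hW x
    rw [huA x, hvA x, E1 x, E2 x] at w
    have ht := sin_sq_add_cos_sq (f x)
    linear_combination w - deriv f x * A x ^ 2 * ht
  -- A never zero
  have hAne : ∀ x, A x ≠ 0 := by
    intro x hx
    have := hkey x
    rw [hx] at this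
    norm_num at this
  -- constant sign
  have hcont : Continuous A := by
    apply Continuous.add
    · exact ((continuous_const.mul Real.continuous_cos).add
        (continuous_const.mul Real.continuous_sin)).mul
        (Real.continuous_cos.comp hfdiff.continuous)
    · exact ((continuous_const.mul Real.continuous_cos).add
        (continuous_const.mul Real.continuous_sin)).mul
        (Real.continuous_sin.comp hfdiff.continuous)
  have hnomix : ∀ x y : ℝ, A x < 0 → 0 < A y → False := by
    intro x y hx hy
    rcases le_total x y with hxy | hxy
    · obtain ⟨z, -, hz⟩ := intermediate_value_Icc hxy hcont.continuousOn ⟨hx.le, hy.le⟩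
      exact hAne z hz
    · obtain ⟨z, -, hz⟩ := intermediate_value_Icc' hxy hcont.continuousOn ⟨hx.le, hy.le⟩
      exact hAne z hz
  have hsq_eq : ∀ x, A x ^ 2 = ((Real.sqrt (deriv f x))⁻¹) ^ 2 := by
    intro x
    rw [inv_pow, sq_sqrt (hf' x).le]
    refine eq_inv_of_mul_eq_one_left ?_
    linear_combination hkey x
  have habs : ∀ t s : ℝ, 0 < t → 0 < s → t ^ 2 = s ^ 2 → t = s := by
    intro t s ht hs h
    nlinarith
  rcases (hAne 0).lt_or_gt with h0 | h0
  · refine ⟨-1, by norm_num, fun x => ?_⟩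
    have hx : A x < 0 := by
      by_contra h
      push_neg at h
      exact hnomix 0 x h0 (h.lt_of_ne' (hAne x))
    have hpos : 0 < -A x := by linarith
    have : -A x = (Real.sqrt (deriv f x))⁻¹ := by
      apply habs _ _ hpos (inv_pos.2 (Real.sqrt_pos.2 (hf' x)))
      rw [neg_sq]; exact hsq_eq x
    constructor
    · linear_combination cos (f x) * this - huA x
    · linear_combination sin (f x) * this - hvA x
  · refine ⟨1, by norm_num, fun x => ?_⟩
    have hx : 0 < A x := by
      by_contra h
      push_neg at h
      exact hnomix x 0 (h.lt_of_ne (hAne x)) h0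
    have : A x = (Real.sqrt (deriv f x))⁻¹ := by
      apply habs _ _ hx (inv_pos.2 (Real.sqrt_pos.2 (hf' x)))
      exact hsq_eq x
    constructor
    · linear_combination huA x + cos (f x) * this
    · linear_combination hvA x + sin (f x) * this


set_option maxHeartbeats 1000000

/-- Let `f : ℝ → ℝ` be a smooth diffeomorphism with `f' > 0` representing a
diffeomorphism of `ℝP¹` in the angular coordinate (so `f(x + π) = f(x) + π`), and let
`F` be its lift to the punctured plane, given in polar coordinates by
`F(x, r) = (f(x), r·f'(x)^{-1/2})`. Then `F` is area-preserving and homogeneous of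
degree one, and `F` is linear with `F ∈ SL(2,ℝ)` if and only if `f` is a projective
(Möbius) transformation of `ℝP¹`. -/
theorem lift_area_preserving_homogeneous (f : ℝ → ℝ)
    (hf : ContDiff ℝ (⊤ : ℕ∞) f) (hf' : ∀ x, 0 < deriv f x)
    (hproj : ∀ x, f (x + π) = f x + π)
    (F : ℝ × ℝ → ℝ × ℝ)
    (hF : ∀ x r : ℝ, F (r * cos x, r * sin x) =
      (r / Real.sqrt (deriv f x) * cos (f x), r / Real.sqrt (deriv f x) * sin (f x))) :
    MeasurePreserving F (volume : Measure (ℝ × ℝ)) volume ∧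
    (∀ c : ℝ, 0 < c → ∀ v : ℝ × ℝ, F (c • v) = c • F v) ∧
    ((∃ M : Matrix (Fin 2) (Fin 2) ℝ, M.det = 1 ∧
        ∀ v : ℝ × ℝ, F v = (M 0 0 * v.1 + M 0 1 * v.2, M 1 0 * v.1 + M 1 1 * v.2)) ↔
      (∃ a b c d : ℝ, a * d - b * c = 1 ∧
        ∀ x : ℝ, sin (f x) * (a * cos x + b * sin x) =
          cos (f x) * (c * cos x + d * sin x))) := by
  have hrep : ∀ v : ℝ × ℝ, ∃ r x : ℝ, v = (r * cos x, r * sin x) :=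
    fun v => ⟨_, _, polar_rep v⟩
  have hsqne : ∀ x, Real.sqrt (deriv f x) ≠ 0 := fun x => (Real.sqrt_pos.2 (hf' x)).ne'
  refine ⟨?_, ?_, ?_⟩
  · -- measure preserving
    have hDc : Continuous (deriv f) := hf.continuous_deriv (by simp)
    have hfc : Continuous f := hf.continuous
    have hP : Continuous (fun q : ℝ × ℝ =>
        ((q.1 / Real.sqrt (deriv f q.2) * cos (f q.2),
          q.1 / Real.sqrt (deriv f q.2) * sin (f q.2)) : ℝ × ℝ)) := by
      have hdiv : Continuous (fun q : ℝ × ℝ => q.1 / Real.sqrt (deriv f q.2)) :=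
        continuous_fst.div (Real.continuous_sqrt.comp (hDc.comp continuous_snd))
          (fun q => hsqne q.2)
      exact (hdiv.mul ((Real.continuous_cos.comp (hfc.comp continuous_snd)))).prodMk
        (hdiv.mul ((Real.continuous_sin.comp (hfc.comp continuous_snd))))
    have hz : Continuous (fun p : ℝ × ℝ => (p.1 : ℂ) + (p.2 : ℂ) * Complex.I) := by
      exact (Complex.continuous_ofReal.comp continuous_fst).add
        ((Complex.continuous_ofReal.comp continuous_snd).mul continuous_const)
    have hFeq : F = (fun q : ℝ × ℝ =>
        ((q.1 / Real.sqrt (deriv f q.2) * cos (f q.2),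
          q.1 / Real.sqrt (deriv f q.2) * sin (f q.2)) : ℝ × ℝ)) ∘
        (fun p : ℝ × ℝ =>
          ((‖((p.1 : ℂ) + (p.2 : ℂ) * Complex.I)‖,
            Complex.arg ((p.1 : ℂ) + (p.2 : ℂ) * Complex.I)) : ℝ × ℝ)) := by
      funext p
      have h := polar_rep p
      conv_lhs => rw [h]
      rw [hF]
      rfl
    have hFm : Measurable F := by
      rw [hFeq]
      exact hP.measurable.comp
        (((continuous_norm.comp hz).measurable).prodMk
          (Complex.measurable_arg.comp hz.measurable))
    have hkeyg : ∀ g : ℝ × ℝ → ENNReal, Measurable g →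
        (∫⁻ p, g (F p)) = ∫⁻ p, g p := by
      intro g hg
      have h1 := my_lintegral_comp_polarCoord_symm (fun p => g (F p))
      rw [← h1]
      have h2 : ∀ p : ℝ × ℝ, g (F (polarCoord.symm p)) =
          g ((p.1 / Real.sqrt (deriv f p.2) * cos (f p.2),
              p.1 / Real.sqrt (deriv f p.2) * sin (f p.2))) := by
        intro p
        exact congrArg g (hF p.2 p.1)
      calc (∫⁻ p in polarCoord.target, ENNReal.ofReal p.1 * g (F (polarCoord.symm p)))
          = ∫⁻ p in polarCoord.target, ENNReal.ofReal p.1 *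
              g ((p.1 / Real.sqrt (deriv f p.2) * cos (f p.2),
                  p.1 / Real.sqrt (deriv f p.2) * sin (f p.2))) :=
            lintegral_congr fun p => by rw [h2 p]
        _ = ∫⁻ p, g p := key_cov f hf hf' hproj g hg
    refine ⟨hFm, ?_⟩
    refine Measure.ext fun s hs => ?_
    rw [Measure.map_apply hFm hs]
    calc volume (F ⁻¹' s)
        = ∫⁻ p, (F ⁻¹' s).indicator (fun _ => (1 : ENNReal)) p := by
          rw [lintegral_indicator (hFm hs), setLIntegral_one]
      _ = ∫⁻ p, s.indicator (fun _ => (1 : ENNReal)) (F p) :=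
          lintegral_congr fun p => by by_cases h : F p ∈ s <;> simp [h]
      _ = ∫⁻ p, s.indicator (fun _ => (1 : ENNReal)) p :=
          hkeyg _ (measurable_const.indicator hs)
      _ = volume s := by rw [lintegral_indicator hs, setLIntegral_one]
  · -- homogeneity
    intro t ht v
    obtain ⟨r, x, hv⟩ := hrep v
    subst hv
    have h1 : t • ((r * cos x, r * sin x) : ℝ × ℝ) = ((t * r) * cos x, (t * r) * sin x) := by
      show ((t * (r * cos x), t * (r * sin x)) : ℝ × ℝ) = _
      exact Prod.ext (by ring) (by ring)
    rw [h1, hF x (t * r), hF x r]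
    show _ = ((t * (r / Real.sqrt (deriv f x) * cos (f x)),
               t * (r / Real.sqrt (deriv f x) * sin (f x))) : ℝ × ℝ)
    refine Prod.ext ?_ ?_ <;> · dsimp only; ring
  · constructor
    · rintro ⟨M, hdet, hM⟩
      refine ⟨M 0 0, M 0 1, M 1 0, M 1 1, ?_, ?_⟩
      · rw [Matrix.det_fin_two] at hdet
        exact hdet
      · intro x
        have h := hM (cos x, sin x)
        have h2 := hF x 1
        rw [one_mul, one_mul] at h2
        rw [h2] at h
        rw [Prod.mk.injEq] at h
        obtain ⟨e1, e2⟩ := h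
        rw [← e1, ← e2]
        ring
    · rintro ⟨a, b, c, d, h1, h2⟩
      obtain ⟨ε, hε2, hε⟩ := mobius_back f hf hf' a b c d h1 h2
      refine ⟨!![ε * a, ε * b; ε * c, ε * d], ?_, ?_⟩
      · rw [Matrix.det_fin_two_of]
        linear_combination (a * d - b * c) * hε2 + h1
      · intro v
        obtain ⟨r, x, hv⟩ := hrep v
        subst hv
        rw [hF x r]
        show _ = ((ε * a * (r * cos x) + ε * b * (r * sin x),
                   ε * c * (r * cos x) + ε * d * (r * sin x)) : ℝ × ℝ)
        obtain ⟨hx1, hx2⟩ := hε x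
        refine Prod.ext ?_ ?_ <;> dsimp only
        · rw [div_eq_mul_inv]
          linear_combination (-r) * hx1
        · rw [div_eq_mul_inv]
          linear_combination (-r) * hx2
end

section
/- Let k₁ > 1 > k₂ > 0 with k₁ + k₂ = 2, both sufficiently close to 1. Then there exist t₁, t₂ > 0 with t₁ + t₂ = π/2 such that the π-periodic step function taking values k₁, k₂, k₁, k₂ on consecutive intervals of lengths t₁, t₂, t₁, t₂ is the potential of a closed centrally symmetric curve; equivalently, e^{t₁A} e^{t₂B} e^{t₁A} e^{t₂B} = −E, where A = [[0,−k₁],[1,0]], B = [[0,−k₂],[1,0]], and E is the identity matrix. -/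
open Real
open scoped Matrix.Norms.Operator

/-!
Write `k = a²`. Then `!![0, -k; 1, 0] = a • J` with `J * J = -1`, so `ℝ[J] ≅ ℂ` and
`exp (t • !![0, -k; 1, 0]) = cos (a t) + sin (a t) • J`. The product `M = e^{t₁A} e^{t₂B}` has
determinant `1`, so by Cayley–Hamilton `M * M = -1` exactly when `trace M = 0`. Along
`t₂ = π/2 - t₁` this trace equals `2 cos (√k₂ π/2) > 0` at `t₁ = 0` and `2 cos (√k₁ π/2) < 0` at
`t₁ = π/2` (as `1 < k₁ < 2` and `k₂ < 1`), so it vanishes in between.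
-/

/-- The rotation by `θ` conjugated by `diag a 1`. -/
noncomputable def scaledRotation (a θ : ℝ) : Matrix (Fin 2) (Fin 2) ℝ :=
  !![cos θ, -(a * sin θ); sin θ / a, cos θ]

theorem exp_smul_hill_sq {a : ℝ} (ha : a ≠ 0) (t : ℝ) :
    NormedSpace.exp (t • !![0, -a ^ 2; 1, 0]) = scaledRotation a (a * t) := by
  set J : Matrix (Fin 2) (Fin 2) ℝ := !![0, -a; a⁻¹, 0]
  have hJ : J * J = -1 := by
    ext i j; fin_cases i <;> fin_cases j <;> simp [J, ha]
  set φ := Complex.liftAux J hJ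
  have hφ : t • !![0, -a ^ 2; 1, 0] = φ ((a * t : ℝ) * Complex.I) := by
    rw [Complex.liftAux_apply]
    ext i j; fin_cases i <;> fin_cases j <;> simp [J] <;> field_simp
  rw [hφ]
  -- the operator norm induces the topology used by `NormedSpace.exp` in the goal, but only up to
  -- defeq of instances
  erw [← NormedSpace.map_exp φ φ.toLinearMap.continuous_of_finiteDimensional]
  rw [← Complex.exp_eq_exp_ℂ, Complex.exp_mul_I, ← Complex.ofReal_cos, ← Complex.ofReal_sin,
    Complex.liftAux_apply]
  simp only [Complex.add_re, Complex.add_im, Complex.ofReal_re, Complex.ofReal_im,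
    Complex.mul_I_re, Complex.mul_I_im, neg_zero, add_zero, zero_add]
  ext i j
  fin_cases i <;> fin_cases j <;>
    simp [J, scaledRotation, Matrix.algebraMap_matrix_apply, mul_comm, div_eq_mul_inv]

theorem exp_smul_hill {k : ℝ} (hk : 0 < k) (t : ℝ) :
    NormedSpace.exp (t • !![0, -k; 1, 0]) = scaledRotation (√k) (√k * t) := by
  simpa [sq_sqrt hk.le] using exp_smul_hill_sq (sqrt_pos.mpr hk).ne' t

theorem det_scaledRotation {a : ℝ} (ha : a ≠ 0) (θ : ℝ) : (scaledRotation a θ).det = 1 := by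
  simp only [scaledRotation, Matrix.det_fin_two_of]
  field_simp
  linear_combination cos_sq_add_sin_sq θ

theorem trace_scaledRotation_mul {a b : ℝ} (ha : a ≠ 0) (hb : b ≠ 0) (θ φ : ℝ) :
    (scaledRotation a θ * scaledRotation b φ).trace =
      2 * cos θ * cos φ - (a / b + b / a) * sin θ * sin φ := by
  simp only [scaledRotation, Matrix.trace_fin_two, Matrix.mul_fin_two, Matrix.of_apply,
    Matrix.cons_val', Matrix.cons_val_zero, Matrix.cons_val_one, Matrix.cons_val_fin_one]
  field_simp
  ring

theorem Matrix.mul_self_eq_neg_one_of_det_eq_one_of_trace_eq_zero {R : Type*} [CommRing R]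
    {M : Matrix (Fin 2) (Fin 2) R} (hdet : M.det = 1) (htr : M.trace = 0) : M * M = -1 := by
  rw [Matrix.det_fin_two] at hdet
  rw [Matrix.trace_fin_two] at htr
  ext i j
  fin_cases i <;> fin_cases j <;>
    simp only [Fin.zero_eta, Fin.mk_one, Fin.isValue, Matrix.mul_apply, Fin.sum_univ_two,
      Matrix.neg_apply, Matrix.one_apply_eq, Matrix.one_apply_ne, ne_eq, zero_ne_one, one_ne_zero,
      not_false_eq_true, neg_zero]
  · linear_combination -hdet + M 0 0 * htr
  · linear_combination M 0 1 * htr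
  · linear_combination M 1 0 * htr
  · linear_combination -hdet + M 1 1 * htr

theorem exists_trace_scaledRotation_mul_eq_zero {a b : ℝ} (ha₁ : 1 < a) (ha₃ : a < 3)
    (hb₀ : 0 < b) (hb₁ : b < 1) :
    ∃ t ∈ Set.Ioo 0 (π / 2),
      (scaledRotation a (a * t) * scaledRotation b (b * (π / 2 - t))).trace = 0 := by
  simp only [trace_scaledRotation_mul (zero_lt_one.trans ha₁).ne' hb₀.ne']
  set f : ℝ → ℝ := fun t => 2 * cos (a * t) * cos (b * (π / 2 - t))
    - (a / b + b / a) * sin (a * t) * sin (b * (π / 2 - t))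
  have hf₀ : f 0 = 2 * cos (b * (π / 2)) := by simp [f]
  have hf₁ : f (π / 2) = 2 * cos (a * (π / 2)) := by simp [f]
  have hpos : 0 < cos (b * (π / 2)) :=
    cos_pos_of_mem_Ioo ⟨by nlinarith [pi_pos], by nlinarith [pi_pos]⟩
  have hneg : cos (a * (π / 2)) < 0 :=
    cos_neg_of_pi_div_two_lt_of_lt (by nlinarith [pi_pos]) (by nlinarith [pi_pos])
  exact intermediate_value_Ioo' (by positivity) (by fun_prop) ⟨by linarith, by linarith⟩

/-- For `k₁ > 1 > k₂ > 0` with `k₁ + k₂ = 2`, both sufficiently close to `1`, there are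
`t₁, t₂ > 0` with `t₁ + t₂ = π/2` such that the monodromy condition
`e^{t₁A} e^{t₂B} e^{t₁A} e^{t₂B} = -E` holds, where `A = [[0,-k₁],[1,0]]`,
`B = [[0,-k₂],[1,0]]`; i.e. the corresponding `π`-periodic `4`-step potential with
values `k₁, k₂, k₁, k₂` yields a closed centrally symmetric curve. -/
theorem exists_closed_step_potential :
    ∃ ε > (0 : ℝ), ∀ k₁ k₂ : ℝ, 1 < k₁ → 0 < k₂ → k₂ < 1 → k₁ + k₂ = 2 →
      |k₁ - 1| < ε → |k₂ - 1| < ε →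
      ∃ t₁ t₂ : ℝ, 0 < t₁ ∧ 0 < t₂ ∧ t₁ + t₂ = π / 2 ∧
        NormedSpace.exp (t₁ • !![0, -k₁; 1, 0]) *
          NormedSpace.exp (t₂ • !![0, -k₂; 1, 0]) *
          NormedSpace.exp (t₁ • !![0, -k₁; 1, 0]) *
          NormedSpace.exp (t₂ • !![0, -k₂; 1, 0]) =
        -(1 : Matrix (Fin 2) (Fin 2) ℝ) := by
  refine ⟨1, one_pos, fun k₁ k₂ hk₁ hk₂ hk₂₁ hsum _ _ => ?_⟩
  have hk₁₀ : 0 < k₁ := by linarith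
  have ha : 0 < √k₁ := sqrt_pos.2 hk₁₀
  have hb : 0 < √k₂ := sqrt_pos.2 hk₂
  obtain ⟨t, ⟨ht₀, htπ⟩, htr⟩ := exists_trace_scaledRotation_mul_eq_zero (a := √k₁)
    ((lt_sqrt zero_le_one).2 (by linarith)) ((sqrt_lt' three_pos).2 (by linarith))
    hb ((sqrt_lt' one_pos).2 (by linarith))
  refine ⟨t, π / 2 - t, ht₀, by linarith, by ring, ?_⟩
  rw [exp_smul_hill hk₁₀, exp_smul_hill hk₂]
  have hdet :
      (scaledRotation √k₁ (√k₁ * t) * scaledRotation √k₂ (√k₂ * (π / 2 - t))).det = 1 := by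
    rw [Matrix.det_mul, det_scaledRotation ha.ne', det_scaledRotation hb.ne', one_mul]
  simpa only [mul_assoc] using Matrix.mul_self_eq_neg_one_of_det_eq_one_of_trace_eq_zero hdet htr
end

section
/- Let k₁ > 1 > k₂ > 0 with k₁ + k₂ = 2. Consider α, β ∈ (0, π/2) constrained by α/√k₁ + β/√k₂ = π/2. Then there exists such a pair (α, β) with tan α · tan β = √(k₁k₂). -/
/-!
Solving the constraint for `β` gives `β = g α` with `g α = √k₂ (π/2 - α/√k₁)`, an affine map
sending `[0, π/2]` into `(0, π/2)`. Hence `α ↦ tan α · tan (g α)` is continuous on `[0, π/2)`,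
vanishes at `0` and tends to `+∞` as `α → π/2⁻`, so it takes every positive value, in particular
`√(k₁k₂)`.
-/

open Real Set Filter Topology

namespace Real

variable {g : ℝ → ℝ}

theorem tendsto_tan_mul_tan_comp_nhdsLT_pi_div_two
    (hg : ContinuousWithinAt g (Iio (π / 2)) (π / 2)) (hgπ : g (π / 2) ∈ Ioo 0 (π / 2)) :
    Tendsto (fun x => tan x * tan (g x)) (𝓝[<] (π / 2)) atTop := by
  have htan : ContinuousAt tan (g (π / 2)) :=
    continuousAt_tan.mpr (cos_pos_of_mem_Ioo ⟨by linarith [hgπ.1, pi_pos], hgπ.2⟩).ne'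
  exact tendsto_tan_pi_div_two.atTop_mul_pos (tan_pos_of_pos_of_lt_pi_div_two hgπ.1 hgπ.2)
    (htan.tendsto.comp hg)

theorem continuousOn_tan_mul_tan_comp (hg : ContinuousOn g (Ico 0 (π / 2)))
    (hgI : MapsTo g (Ico 0 (π / 2)) (Ioo 0 (π / 2))) :
    ContinuousOn (fun x => tan x * tan (g x)) (Ico 0 (π / 2)) := by
  have hcos : ∀ y ∈ Ico 0 (π / 2), cos y ≠ 0 := fun y hy =>
    (cos_pos_of_mem_Ioo ⟨by linarith [hy.1, pi_pos], hy.2⟩).ne'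
  intro x hx
  have htan_g : ContinuousAt tan (g x) :=
    continuousAt_tan.mpr (hcos _ (Ioo_subset_Ico_self (hgI hx)))
  exact (continuousAt_tan.mpr (hcos x hx)).continuousWithinAt.mul
    (htan_g.comp_continuousWithinAt (hg x hx))

theorem exists_tan_mul_tan_comp_eq (hg : ContinuousOn g (Icc 0 (π / 2)))
    (hgI : MapsTo g (Icc 0 (π / 2)) (Ioo 0 (π / 2))) {c : ℝ} (hc : 0 < c) :
    ∃ α ∈ Ioo 0 (π / 2), tan α * tan (g α) = c := by
  have hπ : 0 < π / 2 := by positivity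
  have hIco : Ico 0 (π / 2) ∈ 𝓝[<] (π / 2) := Ico_mem_nhdsLT hπ
  have hlim := tendsto_tan_mul_tan_comp_nhdsLT_pi_div_two
    ((hg.continuousWithinAt ⟨hπ.le, le_rfl⟩).mono_of_mem_nhdsWithin
      (mem_of_superset hIco Ico_subset_Icc_self))
    (hgI ⟨hπ.le, le_rfl⟩)
  have hcont := continuousOn_tan_mul_tan_comp (hg.mono Ico_subset_Icc_self)
    (hgI.mono_left Ico_subset_Icc_self)
  obtain ⟨α, hα, hfα⟩ := isPreconnected_Ico.intermediate_value_Ici (left_mem_Ico.mpr hπ)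
    (le_principal_iff.mpr hIco) hcont hlim (show tan 0 * tan (g 0) ≤ c by simpa using hc.le)
  have hα0 : α ≠ 0 := by
    rintro rfl
    simp [hc.ne] at hfα
  exact ⟨α, ⟨lt_of_le_of_ne hα.1 (Ne.symm hα0), hα.2⟩, hfα⟩

theorem mapsTo_mul_sub_div_Icc_Ioo {a b : ℝ} (ha : 1 < a) (hb₀ : 0 < b) (hb₁ : b < 1) :
    MapsTo (fun x => b * (π / 2 - x / a)) (Icc 0 (π / 2)) (Ioo 0 (π / 2)) := by
  intro x ⟨hx₀, hx₁⟩
  have hπ : 0 < π / 2 := by positivity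
  have hxa : x / a < π / 2 := calc
    x / a ≤ (π / 2) / a := by gcongr
    _ < π / 2 := div_lt_self hπ ha
  have hxa₀ : 0 ≤ x / a := div_nonneg hx₀ (by linarith)
  constructor
  · exact mul_pos hb₀ (by linarith)
  · calc b * (π / 2 - x / a) ≤ b * (π / 2) := by gcongr; linarith
      _ < 1 * (π / 2) := by gcongr
      _ = π / 2 := one_mul _

end Real

theorem exists_tan_solution_general (k₁ k₂ : ℝ)
    (hk₁ : 1 < k₁) (hk₂ : 0 < k₂) (hk₂' : k₂ < 1) :
    ∃ α β : ℝ, α ∈ Set.Ioo (0 : ℝ) (π / 2) ∧ β ∈ Set.Ioo (0 : ℝ) (π / 2) ∧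
      α / Real.sqrt k₁ + β / Real.sqrt k₂ = π / 2 ∧
      Real.tan α * Real.tan β = Real.sqrt (k₁ * k₂) := by
  have hs₁ : 1 < √k₁ := by simpa using Real.sqrt_lt_sqrt zero_le_one hk₁
  have hs₂ : 0 < √k₂ := Real.sqrt_pos.mpr hk₂
  have hs₂' : √k₂ < 1 := by simpa using Real.sqrt_lt_sqrt hk₂.le hk₂'
  let g : ℝ → ℝ := fun x => √k₂ * (π / 2 - x / √k₁)
  have hgI : MapsTo g (Icc 0 (π / 2)) (Ioo 0 (π / 2)) := mapsTo_mul_sub_div_Icc_Ioo hs₁ hs₂ hs₂'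
  have hg : ContinuousOn g (Icc 0 (π / 2)) := by fun_prop
  have hc : 0 < √(k₁ * k₂) := Real.sqrt_pos.mpr (mul_pos (by linarith) hk₂)
  obtain ⟨α, hα, hαβ⟩ := exists_tan_mul_tan_comp_eq hg hgI hc
  refine ⟨α, g α, hα, hgI (Ioo_subset_Icc_self hα), ?_, hαβ⟩
  simp only [g]
  field_simp
  ring

/-- Let `k₁ > 1 > k₂ > 0` with `k₁ + k₂ = 2`. Then there are `α, β ∈ (0, π/2)` with
`α/√k₁ + β/√k₂ = π/2` and `tan α · tan β = √(k₁k₂)`. -/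
theorem exists_tan_solution (k₁ k₂ : ℝ)
    (hk₁ : 1 < k₁) (hk₂ : 0 < k₂) (hk₂' : k₂ < 1) (hsum : k₁ + k₂ = 2) :
    ∃ α β : ℝ, α ∈ Set.Ioo (0 : ℝ) (π / 2) ∧ β ∈ Set.Ioo (0 : ℝ) (π / 2) ∧
      α / Real.sqrt k₁ + β / Real.sqrt k₂ = π / 2 ∧
      Real.tan α * Real.tan β = Real.sqrt (k₁ * k₂) :=
  exists_tan_solution_general k₁ k₂ hk₁ hk₂ hk₂'
end
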